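/- arXiv:1611.04274 — 9 statements merged into one kernel-verified Lean document; each statement's English description precedes it below -/
import Mathlib

section
/- Let R be a unital ring and let φ : R → R be an additive map satisfying condition (P). Then φ(1) commutes with every idempotent of R: for every P ∈ R with P·P = P, one has P·φ(1) = φ(1)·P. -/
/-!
Condition (P) for the orthogonal pair `P`, `1 - P` says `P φ(1) + φ(1) P = 2 w` with
`w = P φ(P) + φ(P) P - φ(P)`. Both `P w` and `w P` equal `P φ(P) P`, so `P` commutes with
`P φ(1) + φ(1) P`; comparing `P (P a + a P) = P a + P a P` with `(P a + a P) P = P a P + a P`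
shows that an idempotent commuting with `P a + a P` commutes with `a`.
-/

namespace IsIdempotentElem

variable {R : Type*} [NonUnitalRing R] {p : R}

theorem commute_of_commute_mul_add_mul (hp : IsIdempotentElem p) {a : R}
    (h : Commute p (p * a + a * p)) : Commute p a := by
  have h' : p * a + p * a * p = p * a * p + a * p := by
    calc p * a + p * a * p = p * (p * a + a * p) := by rw [mul_add, ← mul_assoc, hp.eq, mul_assoc]
      _ = (p * a + a * p) * p := h.eq
      _ = p * a * p + a * p := by rw [add_mul, mul_assoc a, hp.eq]
  exact add_right_cancel (h'.trans (add_comm _ _))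

theorem commute_mul_add_mul_sub (hp : IsIdempotentElem p) (b : R) :
    Commute p (p * b + b * p - b) := by
  show p * (p * b + b * p - b) = (p * b + b * p - b) * p
  rw [mul_sub, mul_add, sub_mul, add_mul, ← mul_assoc, hp.eq, mul_assoc b, hp.eq,
    ← mul_assoc]
  abel

end IsIdempotentElem

theorem phi_one_commutes_with_idempotents
    {R : Type*} [Ring R]
    (φ : R →+ R)
    (hP : ∀ U V : R, U * V = 0 → V * U = 0 →
      φ U * V + V * φ U + U * φ V + φ V * U = 0) :
    ∀ P : R, P * P = P → P * φ 1 = φ 1 * P := by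
  intro P hPP
  have hp : IsIdempotentElem P := hPP
  have hjordan : P * φ 1 + φ 1 * P =
      (P * φ P + φ P * P - φ P) + (P * φ P + φ P * P - φ P) := by
    have h := hP P (1 - P) hp.mul_one_sub_self hp.one_sub_mul_self
    rw [map_sub] at h
    rw [← sub_eq_zero, ← h]
    noncomm_ring
  have hw := hp.commute_mul_add_mul_sub (φ P)
  exact hp.commute_of_commute_mul_add_mul (hjordan ▸ hw.add_right hw)
end

section
/- (Lemma 2.2) In the generalized matrix ring setting, if φ : R → R is an additive map satisfying condition (P), then φ(1) lies in the center of R: φ(1)·r = r·φ(1) for every r ∈ R. -/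
theorem phi_one_central
    {R : Type*} [Ring R] (e : R) (he : e * e = e)
    (h2A : ∀ x : R, e * x * e + e * x * e = 0 → e * x * e = 0)
    (h2B : ∀ x : R, (1 - e) * x * (1 - e) + (1 - e) * x * (1 - e) = 0 →
      (1 - e) * x * (1 - e) = 0)
    (hlf : ∀ a : R, a = e * a * e → (∀ x : R, a * (e * x * (1 - e)) = 0) → a = 0)
    (hrf : ∀ b : R, b = (1 - e) * b * (1 - e) → (∀ x : R, (e * x * (1 - e)) * b = 0) → b = 0)
    (φ : R →+ R)
    (hP : ∀ U V : R, U * V = 0 → V * U = 0 →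
      φ U * V + V * φ U + U * φ V + φ V * U = 0) :
    ∀ r : R, φ 1 * r = r * φ 1 := by
  -- T commutes with every idempotent
  have key : ∀ u : R, u * u = u → φ 1 * u = u * φ 1 := by
    intro u hu
    have hu' : ∀ x : R, u * (u * x) = u * x := fun x => by rw [← mul_assoc, hu]
    have huv : u * (1 - u) = 0 := by rw [mul_sub, mul_one, hu, sub_self]
    have hvu : (1 - u) * u = 0 := by rw [sub_mul, one_mul, hu, sub_self]
    have h := hP u (1 - u) huv hvu
    rw [map_sub] at h
    have h2 := congrArg (fun z => u * z * (1 - u)) h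
    have h3 := congrArg (fun z => (1 - u) * z * u) h
    simp only [mul_add, add_mul, mul_sub, sub_mul, mul_one, one_mul, mul_zero, zero_mul,
      mul_assoc, hu, hu'] at h2 h3
    abel_nf at h2 h3
    simp only [neg_smul, one_smul, add_neg_eq_zero] at h2 h3
    exact (neg_add_eq_zero.mp h3).symm.trans h2.symm
  have he' : ∀ x : R, e * (e * x) = e * x := fun x => by rw [← mul_assoc, he]
  have hef : e * (1 - e) = 0 := by rw [mul_sub, mul_one, he, sub_self]
  have hfe : (1 - e) * e = 0 := by rw [sub_mul, one_mul, he, sub_self]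
  have hef0 : ∀ x : R, e * ((1 - e) * x) = 0 := fun x => by rw [← mul_assoc, hef, zero_mul]
  have hfe0 : ∀ x : R, (1 - e) * (e * x) = 0 := fun x => by rw [← mul_assoc, hfe, zero_mul]
  have hff : (1 - e) * (1 - e) = 1 - e := by
    rw [mul_sub, mul_one, sub_mul, one_mul, he, sub_self, sub_zero]
  have hff' : ∀ x : R, (1 - e) * ((1 - e) * x) = (1 - e) * x := fun x => by
    rw [← mul_assoc, hff]
  have hTe : φ 1 * e = e * φ 1 := key e he
  have hTf : φ 1 * (1 - e) = (1 - e) * φ 1 := by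
    rw [mul_sub, sub_mul, mul_one, one_mul, hTe]
  -- T commutes with eRf
  have hTm : ∀ x : R, φ 1 * (e * x * (1 - e)) = (e * x * (1 - e)) * φ 1 := by
    intro x
    have hu : (e + e * x * (1 - e)) * (e + e * x * (1 - e)) = e + e * x * (1 - e) := by
      simp only [mul_add, add_mul, mul_assoc, he, he', hef0, hfe0, hfe, hef, mul_zero,
        zero_mul, add_zero, zero_add]
    have h := key _ hu
    have h' : φ 1 * e + φ 1 * (e * x * (1 - e)) = e * φ 1 + (e * x * (1 - e)) * φ 1 := by
      rw [← mul_add, ← add_mul]; exact h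
    rw [hTe] at h'
    exact add_left_cancel h'
  -- T commutes with fRe
  have hTn : ∀ x : R, φ 1 * ((1 - e) * x * e) = ((1 - e) * x * e) * φ 1 := by
    intro x
    have hu : (e + (1 - e) * x * e) * (e + (1 - e) * x * e) = e + (1 - e) * x * e := by
      simp only [mul_add, add_mul, mul_assoc, he, he', hef0, hfe0, hfe, hef, mul_zero,
        zero_mul, add_zero, zero_add, hff']
    have h := key _ hu
    have h' : φ 1 * e + φ 1 * ((1 - e) * x * e) = e * φ 1 + ((1 - e) * x * e) * φ 1 := by
      rw [← mul_add, ← add_mul]; exact h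
    rw [hTe] at h'
    exact add_left_cancel h'
  -- T commutes with eRe
  have hcA : ∀ y : R, y = e * y * e → φ 1 * y = y * φ 1 := by
    intro y hy
    have ey : e * y = y := by rw [hy]; simp only [mul_assoc, he, he']
    have ye : y * e = y := by rw [hy]; simp only [mul_assoc, he]
    have hd : φ 1 * y - y * φ 1 = 0 := by
      apply hlf
      · have c1 : e * (φ 1 * y) * e = φ 1 * y := by
          rw [← mul_assoc e (φ 1) y, ← hTe, mul_assoc (φ 1) e y, ey, mul_assoc, ye]
        have c2 : e * (y * φ 1) * e = y * φ 1 := by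
          rw [← mul_assoc e y (φ 1), ey, mul_assoc, hTe, ← mul_assoc, ye]
        rw [mul_sub, sub_mul, c1, c2]
      · intro x
        have hy1 : y * (e * x * (1 - e)) = e * (y * x) * (1 - e) := by
          rw [mul_assoc e x (1 - e), ← mul_assoc y e (x * (1 - e)), ye,
            ← mul_assoc, ← mul_assoc, ey]
        rw [sub_mul, mul_assoc (φ 1) y (e * x * (1 - e)), mul_assoc y (φ 1) (e * x * (1 - e)),
          hTm x, ← mul_assoc y (e * x * (1 - e)) (φ 1), hy1, hTm (y * x), sub_self]
    rw [sub_eq_zero] at hd; exact hd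
  -- T commutes with fRf
  have hcB : ∀ y : R, y = (1 - e) * y * (1 - e) → φ 1 * y = y * φ 1 := by
    intro y hy
    have fy : (1 - e) * y = y := by rw [hy]; simp only [mul_assoc, hff, hff']
    have yf : y * (1 - e) = y := by rw [hy]; simp only [mul_assoc, hff]
    have hd : φ 1 * y - y * φ 1 = 0 := by
      apply hrf
      · have c1 : (1 - e) * (φ 1 * y) * (1 - e) = φ 1 * y := by
          rw [← mul_assoc (1 - e) (φ 1) y, ← hTf, mul_assoc (φ 1) (1 - e) y, fy,
            mul_assoc, yf]
        have c2 : (1 - e) * (y * φ 1) * (1 - e) = y * φ 1 := by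
          rw [← mul_assoc (1 - e) y (φ 1), fy, mul_assoc, hTf, ← mul_assoc, yf]
        have expand : (1 - e) * (φ 1 * y - y * φ 1) * (1 - e)
            = (1 - e) * (φ 1 * y) * (1 - e) - (1 - e) * (y * φ 1) * (1 - e) := by noncomm_ring
        rw [expand, c1, c2]
      · intro x
        have hy1 : (e * x * (1 - e)) * y = e * (x * y) * (1 - e) := by
          rw [mul_assoc (e * x) (1 - e) y, fy, mul_assoc e x y, mul_assoc e (x * y) (1 - e),
            mul_assoc x y (1 - e), yf]
        rw [mul_sub, ← mul_assoc (e * x * (1 - e)) (φ 1) y, ← hTm x,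
          mul_assoc (φ 1) (e * x * (1 - e)) y, ← mul_assoc (e * x * (1 - e)) y (φ 1),
          hy1, hTm (x * y), sub_self]
    rw [sub_eq_zero] at hd; exact hd
  intro r
  have hr : r = e * r * e + e * r * (1 - e) + (1 - e) * r * e + (1 - e) * r * (1 - e) := by
    noncomm_ring
  have c1 : φ 1 * (e * r * e) = (e * r * e) * φ 1 := by
    apply hcA; simp only [mul_assoc, he, he']
  have c4 : φ 1 * ((1 - e) * r * (1 - e)) = ((1 - e) * r * (1 - e)) * φ 1 := by
    apply hcB; simp only [mul_assoc, hff, hff']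
  calc φ 1 * r = φ 1 * (e * r * e + e * r * (1 - e) + (1 - e) * r * e
        + (1 - e) * r * (1 - e)) := by rw [← hr]
    _ = φ 1 * (e * r * e) + φ 1 * (e * r * (1 - e)) + φ 1 * ((1 - e) * r * e)
        + φ 1 * ((1 - e) * r * (1 - e)) := by rw [mul_add, mul_add, mul_add]
    _ = (e * r * e) * φ 1 + (e * r * (1 - e)) * φ 1 + ((1 - e) * r * e) * φ 1
        + ((1 - e) * r * (1 - e)) * φ 1 := by rw [c1, hTm r, hTn r, c4]
    _ = (e * r * e + e * r * (1 - e) + (1 - e) * r * e + (1 - e) * r * (1 - e)) * φ 1 := by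
        rw [add_mul, add_mul, add_mul]
    _ = r * φ 1 := by rw [← hr]
end

section
/- (Lemma 2.3) In the generalized matrix ring setting, if φ : R → R is an additive map satisfying condition (P), then e·φ(f)·e = 0 and f·φ(e)·f = 0, where f = 1 − e. -/
namespace IsIdempotentElem

variable {R : Type*} [Ring R] {p q : R}

theorem mul_jordan_add_jordan_mul_self (hp : IsIdempotentElem p) (hpq : p * q = 0)
    (hqp : q * p = 0) (a b : R) :
    p * (a * q + q * a + p * b + b * p) * p = p * b * p + p * b * p := by
  have hpp : p * p = p := hp
  calc p * (a * q + q * a + p * b + b * p) * p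
      = p * a * (q * p) + (p * q) * a * p + (p * p) * b * p + p * b * (p * p) := by
        noncomm_ring
    _ = p * b * p + p * b * p := by simp only [hpq, hqp, hpp, mul_zero, zero_mul, zero_add]

theorem corner_add_corner_eq_zero (φ : R → R)
    (hP : ∀ U V : R, U * V = 0 → V * U = 0 → φ U * V + V * φ U + U * φ V + φ V * U = 0)
    (hp : IsIdempotentElem p) (hpq : p * q = 0) (hqp : q * p = 0) :
    p * φ q * p + p * φ q * p = 0 := by
  rw [← hp.mul_jordan_add_jordan_mul_self hpq hqp (φ p), hP p q hpq hqp, mul_zero, zero_mul]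

end IsIdempotentElem

theorem corner_of_phi_idempotents_vanish_general
    {R : Type*} [Ring R] (e : R) (he : e * e = e)
    (h2A : ∀ x : R, e * x * e + e * x * e = 0 → e * x * e = 0)
    (h2B : ∀ x : R, (1 - e) * x * (1 - e) + (1 - e) * x * (1 - e) = 0 →
      (1 - e) * x * (1 - e) = 0)
    (φ : R →+ R)
    (hP : ∀ U V : R, U * V = 0 → V * U = 0 →
      φ U * V + V * φ U + U * φ V + φ V * U = 0) :
    e * φ (1 - e) * e = 0 ∧ (1 - e) * φ e * (1 - e) = 0 := by
  have he : IsIdempotentElem e := he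
  exact ⟨h2A _ (he.corner_add_corner_eq_zero φ hP he.mul_one_sub_self he.one_sub_mul_self),
    h2B _ (he.one_sub.corner_add_corner_eq_zero φ hP he.one_sub_mul_self he.mul_one_sub_self)⟩

theorem corner_of_phi_idempotents_vanish
    {R : Type*} [Ring R] (e : R) (he : e * e = e)
    (h2A : ∀ x : R, e * x * e + e * x * e = 0 → e * x * e = 0)
    (h2B : ∀ x : R, (1 - e) * x * (1 - e) + (1 - e) * x * (1 - e) = 0 →
      (1 - e) * x * (1 - e) = 0)
    (hlf : ∀ a : R, a = e * a * e → (∀ x : R, a * (e * x * (1 - e)) = 0) → a = 0)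
    (hrf : ∀ b : R, b = (1 - e) * b * (1 - e) → (∀ x : R, (e * x * (1 - e)) * b = 0) → b = 0)
    (φ : R →+ R)
    (hP : ∀ U V : R, U * V = 0 → V * U = 0 →
      φ U * V + V * φ U + U * φ V + φ V * U = 0) :
    e * φ (1 - e) * e = 0 ∧ (1 - e) * φ e * (1 - e) = 0 :=
  corner_of_phi_idempotents_vanish_general e he h2A h2B φ hP
end

section
/- (Lemma 2.4(1)) In the generalized matrix ring setting, let φ : R → R be an additive map satisfying condition (P), and define ψ(U) = φ(U) − φ(1)·U + T·U − U·T where T = e·φ(e)·f + f·φ(f)·e and f = 1 − e. Then ψ(e) = 0 and ψ(f) = 0. -/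
/-!
Put `p = φ e`, `q = φ (1 - e)` and `f = 1 - e`. Condition (P) applied to the orthogonal pair
`(e, f)` gives `p f + f p + e q + q e = 0`; compressing this by `e` and by `f` leaves
`2 (e q e) = 0` and `2 (f p f) = 0`, so both corners vanish by 2-torsion freeness.
Since `φ 1 = p + q`, a direct Peirce computation gives `ψ e = f p f - e q e` and
`ψ f = e q e - f p f`.
-/

section Peirce

variable {R : Type*} [Ring R] {e f : R}

lemma mul_jordan_add_jordan_mul_of_orthogonal (he : IsIdempotentElem e) (hef : e * f = 0)
    (hfe : f * e = 0) (p q : R) :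
    e * (p * f + f * p + e * q + q * e) * e = e * q * e + e * q * e := by
  simp only [mul_add, add_mul, mul_assoc, hfe, mul_zero, zero_add, he.eq, ← mul_assoc e e,
    ← mul_assoc e f, hef, zero_mul]

lemma sub_mul_add_commutator_eq_corner_sub_corner (he : IsIdempotentElem e) (hsum : e + f = 1)
    (p q : R) :
    p - (p + q) * e + ((e * p * f + f * q * e) * e - e * (e * p * f + f * q * e)) =
      f * p * f - e * q * e := by
  obtain rfl : f = 1 - e := eq_sub_of_add_eq' hsum
  have he' : ∀ x : R, e * (e * x) = e * x := fun x => by rw [← mul_assoc, he.eq]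
  simp only [mul_sub, sub_mul, mul_one, one_mul, mul_add, add_mul, mul_assoc, he.eq, he']
  abel

end Peirce

theorem psi_vanishes_on_idempotents_general
    {R : Type*} [Ring R] (e : R) (he : e * e = e)
    (h2A : ∀ x : R, e * x * e + e * x * e = 0 → e * x * e = 0)
    (h2B : ∀ x : R, (1 - e) * x * (1 - e) + (1 - e) * x * (1 - e) = 0 →
      (1 - e) * x * (1 - e) = 0)
    (φ : R →+ R)
    (hP : ∀ U V : R, U * V = 0 → V * U = 0 →
      φ U * V + V * φ U + U * φ V + φ V * U = 0)
    (ψ : R → R)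
    (hψ : ∀ U : R, ψ U = φ U - φ 1 * U +
      ((e * φ e * (1 - e) + (1 - e) * φ (1 - e) * e) * U -
        U * (e * φ e * (1 - e) + (1 - e) * φ (1 - e) * e))) :
    ψ e = 0 ∧ ψ (1 - e) = 0 := by
  have he : IsIdempotentElem e := he
  have hef := he.mul_one_sub_self
  have hfe := he.one_sub_mul_self
  have hP_ef := hP e (1 - e) hef hfe
  have heqe : e * φ (1 - e) * e = 0 := h2A _ <| by
    rw [← mul_jordan_add_jordan_mul_of_orthogonal he hef hfe (φ e), hP_ef, mul_zero, zero_mul]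
  have hfpf : (1 - e) * φ e * (1 - e) = 0 := h2B _ <| by
    rw [← mul_jordan_add_jordan_mul_of_orthogonal he.one_sub hfe hef (φ (1 - e)),
      show φ (1 - e) * e + e * φ (1 - e) + (1 - e) * φ e + φ e * (1 - e) = 0 by
        rw [← hP_ef]; abel,
      mul_zero, zero_mul]
  have hφ1 : φ 1 = φ e + φ (1 - e) := by rw [← map_add, add_sub_cancel]
  constructor
  · rw [hψ, hφ1, sub_mul_add_commutator_eq_corner_sub_corner he (add_sub_cancel e 1), hfpf, heqe,
      sub_zero]
  · rw [hψ, hφ1, add_comm (φ e), add_comm (e * φ e * (1 - e)),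
      sub_mul_add_commutator_eq_corner_sub_corner he.one_sub (sub_add_cancel 1 e), hfpf, heqe,
      sub_zero]

theorem psi_vanishes_on_idempotents
    {R : Type*} [Ring R] (e : R) (he : e * e = e)
    (h2A : ∀ x : R, e * x * e + e * x * e = 0 → e * x * e = 0)
    (h2B : ∀ x : R, (1 - e) * x * (1 - e) + (1 - e) * x * (1 - e) = 0 →
      (1 - e) * x * (1 - e) = 0)
    (hlf : ∀ a : R, a = e * a * e → (∀ x : R, a * (e * x * (1 - e)) = 0) → a = 0)
    (hrf : ∀ b : R, b = (1 - e) * b * (1 - e) → (∀ x : R, (e * x * (1 - e)) * b = 0) → b = 0)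
    (φ : R →+ R)
    (hP : ∀ U V : R, U * V = 0 → V * U = 0 →
      φ U * V + V * φ U + U * φ V + φ V * U = 0)
    (ψ : R → R)
    (hψ : ∀ U : R, ψ U = φ U - φ 1 * U +
      ((e * φ e * (1 - e) + (1 - e) * φ (1 - e) * e) * U -
        U * (e * φ e * (1 - e) + (1 - e) * φ (1 - e) * e))) :
    ψ e = 0 ∧ ψ (1 - e) = 0 :=
  psi_vanishes_on_idempotents_general e he h2A h2B φ hP ψ hψ
end

section
/- (Lemma 2.4(2)) In the generalized matrix ring setting, let φ : R → R be an additive map satisfying condition (P), and define ψ(U) = φ(U) − φ(1)·U + T·U − U·T where T = e·φ(e)·f + f·φ(f)·e and f = 1 − e. Then ψ also satisfies condition (P): for all U, V ∈ R with UV = 0 and VU = 0, one has ψ(U)V + Vψ(U) + Uψ(V) + ψ(V)U = 0. -/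
/-!
Here ψ = φ - (φ 1 * ·) + (T * · - · * T). Condition (P) is additive in the map and holds for
inner derivations and for multiplication by a central element, so it suffices that `φ 1` is
central. Testing (P) on `(e, f)`, `(e + m, f - m)` and `(m, m)` for `m ∈ eRf`, and on the mirror
pairs, shows that `φ 1` has no off-diagonal Peirce components and that its corners
`a = e φ(1) e`, `b = f φ(1) f` satisfy `a m = m b` on `eRf` and `b n = n a` on `fRe`.
Faithfulness of `eRf` then makes `a` central in `eRe` and `b` central in `fRf`, so `φ 1` is
central.
-/

set_option linter.unusedSimpArgs false

def ConditionP {R : Type*} [Ring R] (φ : R → R) : Prop :=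
  ∀ U V : R, U * V = 0 → V * U = 0 → φ U * V + V * φ U + U * φ V + φ V * U = 0

namespace ConditionP

variable {R : Type*} [Ring R] {φ χ : R → R}

theorem add (hφ : ConditionP φ) (hχ : ConditionP χ) : ConditionP fun U => φ U + χ U :=
  fun U V hUV hVU => by
    linear_combination (norm := noncomm_ring) hφ U V hUV hVU + hχ U V hUV hVU

theorem sub (hφ : ConditionP φ) (hχ : ConditionP χ) : ConditionP fun U => φ U - χ U :=
  fun U V hUV hVU => by
    linear_combination (norm := noncomm_ring) hφ U V hUV hVU - hχ U V hUV hVU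

end ConditionP

theorem conditionP_commutator {R : Type*} [Ring R] (T : R) :
    ConditionP fun U => T * U - U * T := fun U V hUV hVU => by
  linear_combination (norm := noncomm_ring) T * hVU - hVU * T - hUV * T + T * hUV

theorem conditionP_mul_left {R : Type*} [Ring R] {z : R} (hz : z ∈ Subring.center R) :
    ConditionP (z * ·) := fun U V hUV hVU => by
  rw [Subring.mem_center_iff] at hz
  linear_combination (norm := noncomm_ring)
    z * hUV + z * hVU - V * hz U + hVU * z - U * hz V + hUV * z

/-- With `← mul_assoc` and distributivity, these rules normalize products involving `e` and `f`. -/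
theorem peirce_mul_rules {R : Type*} [Ring R] {e f : R} (he : IsIdempotentElem e)
    (hf : IsIdempotentElem f) (hef : e * f = 0) (hfe : f * e = 0) :
    e * e = e ∧ f * f = f ∧ e * f = 0 ∧ f * e = 0 ∧ (∀ x, x * e * e = x * e) ∧
      (∀ x, x * f * f = x * f) ∧ (∀ x, x * e * f = 0) ∧ (∀ x, x * f * e = 0) :=
  ⟨he, hf, hef, hfe, he.mul_mul_self, hf.mul_mul_self,
    fun x => by rw [mul_assoc, hef, mul_zero], fun x => by rw [mul_assoc, hfe, mul_zero]⟩

section Peirce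

variable {R : Type*} [Ring R] {e f : R} (he : IsIdempotentElem e) (hf : IsIdempotentElem f)
  (hef : e * f = 0) (hfe : f * e = 0)
include he hf hef hfe

section Corner

variable {φ : R →+ R} (hφ : ConditionP φ)
include hφ

theorem ConditionP.corner_map_eq_zero
    (h2 : ∀ x : R, e * x * e + e * x * e = 0 → e * x * e = 0) :
    e * φ f * e = 0 := by
  refine h2 _ ?_
  linear_combination (norm := (simp only [mul_add, add_mul, mul_sub, sub_mul, ← mul_assoc,
    peirce_mul_rules he hf hef hfe, zero_mul, mul_zero]; abel)) e * hφ e f hef hfe * e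

theorem ConditionP.corner_map_add_eq_zero : e * φ e * f + e * φ f * f = 0 := by
  linear_combination (norm := (simp only [mul_add, add_mul, mul_sub, sub_mul, ← mul_assoc,
    peirce_mul_rules he hf hef hfe, zero_mul, mul_zero]; abel)) e * hφ e f hef hfe * f

theorem ConditionP.corner_map_intertwine
    (h2e : ∀ x : R, e * x * e + e * x * e = 0 → e * x * e = 0)
    (h2f : ∀ x : R, f * x * f + f * x * f = 0 → f * x * f = 0) (x : R) :
    e * φ e * e * (e * x * f) = e * x * f * (f * φ f * f) := by
  have hUV : (e + e * x * f) * (f - e * x * f) = 0 := by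
    simp only [mul_add, add_mul, mul_sub, sub_mul, ← mul_assoc, peirce_mul_rules he hf hef hfe,
      zero_mul, mul_zero]
    abel
  have hVU : (f - e * x * f) * (e + e * x * f) = 0 := by
    simp only [mul_add, add_mul, mul_sub, sub_mul, ← mul_assoc, peirce_mul_rules he hf hef hfe,
      zero_mul, mul_zero]
    abel
  have hsq : e * x * f * (e * x * f) = 0 := by
    simp only [← mul_assoc, peirce_mul_rules he hf hef hfe, zero_mul]
  have hpair := hφ _ _ hUV hVU
  rw [map_sub, map_add] at hpair
  linear_combination (norm := (simp only [mul_add, add_mul, mul_sub, sub_mul, ← mul_assoc,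
    peirce_mul_rules he hf hef hfe, zero_mul, mul_zero]; abel))
    -(e * hpair * f) - e * hφ _ _ hsq hsq * f + hφ.corner_map_add_eq_zero he hf hef hfe
      - e * x * hφ.corner_map_eq_zero hf he hfe hef h2f
      + hφ.corner_map_eq_zero he hf hef hfe h2e * (x * f)

variable (hsum : e + f = 1)
include hsum

theorem ConditionP.corner_map_one_eq_zero : e * φ 1 * f = 0 := by
  rw [← hsum, map_add, mul_add, add_mul]
  exact hφ.corner_map_add_eq_zero he hf hef hfe

theorem ConditionP.corner_map_one_intertwine
    (h2e : ∀ x : R, e * x * e + e * x * e = 0 → e * x * e = 0)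
    (h2f : ∀ x : R, f * x * f + f * x * f = 0 → f * x * f = 0) (x : R) :
    e * φ 1 * e * (e * x * f) = e * x * f * (f * φ 1 * f) := by
  rw [← hsum, map_add]
  linear_combination (norm := (simp only [mul_add, add_mul, ← mul_assoc,
    peirce_mul_rules he hf hef hfe, zero_mul, mul_zero]; abel))
    hφ.corner_map_intertwine he hf hef hfe h2e h2f x
      + hφ.corner_map_eq_zero he hf hef hfe h2e * (x * f)
      - e * x * hφ.corner_map_eq_zero hf he hfe hef h2f

end Corner

theorem corner_commute_of_faithful_left
    (hlf : ∀ a : R, a = e * a * e → (∀ x : R, a * (e * x * f) = 0) → a = 0) {z : R}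
    (hz : ∀ x : R, e * z * e * (e * x * f) = e * x * f * (f * z * f)) (y : R) :
    e * z * e * (e * y * e) = e * y * e * (e * z * e) := by
  refine sub_eq_zero.mp (hlf _ ?_ fun x => ?_)
  · simp only [mul_sub, sub_mul, ← mul_assoc, peirce_mul_rules he hf hef hfe]
  · linear_combination (norm := (simp only [mul_sub, sub_mul, ← mul_assoc,
      peirce_mul_rules he hf hef hfe]; abel)) hz (y * e * x) - e * y * e * hz x

theorem corner_commute_of_faithful_right
    (hrf : ∀ b : R, b = f * b * f → (∀ x : R, (e * x * f) * b = 0) → b = 0) {z : R}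
    (hz : ∀ x : R, e * z * e * (e * x * f) = e * x * f * (f * z * f)) (y : R) :
    f * z * f * (f * y * f) = f * y * f * (f * z * f) := by
  refine sub_eq_zero.mp (hrf _ ?_ fun x => ?_)
  · simp only [mul_sub, sub_mul, ← mul_assoc, peirce_mul_rules he hf hef hfe]
  · linear_combination (norm := (simp only [mul_sub, sub_mul, ← mul_assoc,
      peirce_mul_rules he hf hef hfe]; abel)) -(hz x * (f * y * f)) + hz (x * f * y)

theorem mem_center_of_corners (hsum : e + f = 1)
    (hlf : ∀ a : R, a = e * a * e → (∀ x : R, a * (e * x * f) = 0) → a = 0)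
    (hrf : ∀ b : R, b = f * b * f → (∀ x : R, (e * x * f) * b = 0) → b = 0) {z : R}
    (hzef : e * z * f = 0) (hzfe : f * z * e = 0)
    (hz : ∀ x : R, e * z * e * (e * x * f) = e * x * f * (f * z * f))
    (hz' : ∀ x : R, f * z * f * (f * x * e) = f * x * e * (e * z * e)) :
    z ∈ Subring.center R := by
  rw [Subring.mem_center_iff]
  intro g
  have hzA := corner_commute_of_faithful_left he hf hef hfe hlf hz g
  have hzB := corner_commute_of_faithful_right he hf hef hfe hrf hz g
  calc g * z = ((e + f) * g * (e + f)) * ((e + f) * z * (e + f)) := by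
        rw [hsum, one_mul, mul_one, one_mul, mul_one]
    _ = ((e + f) * z * (e + f)) * ((e + f) * g * (e + f)) := by
        linear_combination (norm := (simp only [mul_add, add_mul, ← mul_assoc,
          peirce_mul_rules he hf hef hfe, zero_mul, mul_zero]; abel))
          -hzA - hz g - hz' g - hzB + (e * g + f * g) * (hzef + hzfe)
            - (hzef + hzfe) * (g * e + g * f)
    _ = z * g := by rw [hsum, one_mul, mul_one, one_mul, mul_one]

theorem ConditionP.map_one_mem_center {φ : R →+ R} (hφ : ConditionP φ) (hsum : e + f = 1)
    (h2e : ∀ x : R, e * x * e + e * x * e = 0 → e * x * e = 0)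
    (h2f : ∀ x : R, f * x * f + f * x * f = 0 → f * x * f = 0)
    (hlf : ∀ a : R, a = e * a * e → (∀ x : R, a * (e * x * f) = 0) → a = 0)
    (hrf : ∀ b : R, b = f * b * f → (∀ x : R, (e * x * f) * b = 0) → b = 0) :
    φ 1 ∈ Subring.center R :=
  have hsum' : f + e = 1 := (add_comm f e).trans hsum
  mem_center_of_corners he hf hef hfe hsum hlf hrf
    (hφ.corner_map_one_eq_zero he hf hef hfe hsum)
    (hφ.corner_map_one_eq_zero hf he hfe hef hsum')
    (hφ.corner_map_one_intertwine he hf hef hfe hsum h2e h2f)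
    (hφ.corner_map_one_intertwine hf he hfe hef hsum' h2f h2e)

end Peirce

theorem psi_satisfies_condition_P
    {R : Type*} [Ring R] (e : R) (he : e * e = e)
    (h2A : ∀ x : R, e * x * e + e * x * e = 0 → e * x * e = 0)
    (h2B : ∀ x : R, (1 - e) * x * (1 - e) + (1 - e) * x * (1 - e) = 0 →
      (1 - e) * x * (1 - e) = 0)
    (hlf : ∀ a : R, a = e * a * e → (∀ x : R, a * (e * x * (1 - e)) = 0) → a = 0)
    (hrf : ∀ b : R, b = (1 - e) * b * (1 - e) → (∀ x : R, (e * x * (1 - e)) * b = 0) → b = 0)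
    (φ : R →+ R)
    (hP : ∀ U V : R, U * V = 0 → V * U = 0 →
      φ U * V + V * φ U + U * φ V + φ V * U = 0)
    (ψ : R → R)
    (hψ : ∀ U : R, ψ U = φ U - φ 1 * U +
      ((e * φ e * (1 - e) + (1 - e) * φ (1 - e) * e) * U -
        U * (e * φ e * (1 - e) + (1 - e) * φ (1 - e) * e))) :
    ∀ U V : R, U * V = 0 → V * U = 0 →
      ψ U * V + V * ψ U + U * ψ V + ψ V * U = 0 := by
  have hcenter : φ 1 ∈ Subring.center R :=
    ConditionP.map_one_mem_center he (IsIdempotentElem.one_sub he)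
      (IsIdempotentElem.mul_one_sub_self he) (IsIdempotentElem.one_sub_mul_self he) hP
      (add_sub_cancel e 1) h2A h2B hlf hrf
  obtain rfl : ψ = _ := funext hψ
  exact (ConditionP.sub hP (conditionP_mul_left hcenter)).add (conditionP_commutator _)
end

section
/- (Lemma 2.5(1),(2)) In the generalized matrix ring setting, let φ : R → R be an additive map satisfying condition (P), and define ψ(U) = φ(U) − φ(1)·U + T·U − U·T where T = e·φ(e)·f + f·φ(f)·e and f = 1 − e. Then ψ maps the corner eRe into eRe and the corner fRf into fRf: for every a ∈ R with a = eae one has ψ(a) = e·ψ(a)·e, and for every b ∈ R with b = fbf one has ψ(b) = f·ψ(b)·f. -/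
/-!
Put `f = 1 - e`. For `a ∈ eRe` both pairs `(e, f)` and `(a, f)` are orthogonal, so (P) applies
to them. Sandwiching the two resulting identities between `e` and `f` gives `e φ(1) f = 0`,
`f φ(1) e = 0`, `2 f φ(a) f = 0`, `e φ(a) f = -a φ(f) f` and `f φ(a) e = -f φ(f) a`, which are
exactly what is needed to kill the three off-diagonal Pierce components of `ψ(a)`. Since `ψ` is
symmetric in `e` and `f`, the same argument handles `fRf`.
-/

section

variable {R : Type*} [Ring R]

def IsJordanDerivableAtZero (φ : R →+ R) : Prop :=
  ∀ U V : R, U * V = 0 → V * U = 0 → φ U * V + V * φ U + U * φ V + φ V * U = 0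

def offDiagonalCorrection (φ : R →+ R) (e f : R) : R := e * φ e * f + f * φ f * e

def correctedMap (φ : R →+ R) (e f U : R) : R :=
  φ U - φ 1 * U + (offDiagonalCorrection φ e f * U - U * offDiagonalCorrection φ e f)

theorem correctedMap_comm (φ : R →+ R) (e f : R) :
    correctedMap φ e f = correctedMap φ f e := by
  unfold correctedMap offDiagonalCorrection
  rw [add_comm (e * φ e * f)]

theorem mul_mul_eq_of_mul_eq {a b c : R} (h : a * b = c) (x : R) : a * (b * x) = c * x := by
  rw [← mul_assoc, h]

section Pierce

variable {e f : R}

theorem IsIdempotentElem.mul_eq_zero_of_add_eq_one (he : IsIdempotentElem e) (hsum : e + f = 1) :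
    e * f = 0 := by
  rw [eq_sub_of_add_eq' hsum]
  exact he.mul_one_sub_self

theorem IsIdempotentElem.mul_eq_zero_of_add_eq_one' (he : IsIdempotentElem e) (hsum : e + f = 1) :
    f * e = 0 := by
  rw [eq_sub_of_add_eq' hsum]
  exact he.one_sub_mul_self

theorem IsIdempotentElem.of_add_eq_one (he : IsIdempotentElem e) (hsum : e + f = 1) :
    IsIdempotentElem f := by
  rw [eq_sub_of_add_eq' hsum]
  exact he.one_sub

theorem eq_of_pierce_off_corners_eq_zero (hsum : e + f = 1) {x : R} (hef : e * x * f = 0)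
    (hfe : f * x * e = 0) (hff : f * x * f = 0) : x = e * x * e := by
  calc x = (e + f) * x * (e + f) := by rw [hsum, one_mul, mul_one]
    _ = e * x * e + e * x * f + f * x * e + f * x * f := by noncomm_ring
    _ = e * x * e := by rw [hef, hfe, hff, add_zero, add_zero, add_zero]

end Pierce

namespace IsJordanDerivableAtZero

variable {φ : R →+ R} {e f : R}

theorem mul_map_one_mul_eq_zero (hP : IsJordanDerivableAtZero φ) (he : IsIdempotentElem e)
    (hsum : e + f = 1) : e * φ 1 * f = 0 := by
  have hef := he.mul_eq_zero_of_add_eq_one hsum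
  have hfe := he.mul_eq_zero_of_add_eq_one' hsum
  have hf := he.of_add_eq_one hsum
  have h := congrArg (e * · * f) (hP e f hef hfe)
  rw [← hsum, map_add]
  simpa only [mul_add, add_mul, mul_assoc, mul_mul_eq_of_mul_eq he.eq, mul_mul_eq_of_mul_eq hef,
    hf.eq, hef, hfe, mul_zero, zero_mul, add_zero] using h

theorem apply_corner_compl (hP : IsJordanDerivableAtZero φ) (he : IsIdempotentElem e)
    (hsum : e + f = 1) (x : R) :
    φ (e * x * e) * f + f * φ (e * x * e) + e * x * e * φ f + φ f * (e * x * e) = 0 :=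
  hP _ _ (by simp [mul_assoc, he.mul_eq_zero_of_add_eq_one hsum])
    (by simp [← mul_assoc, he.mul_eq_zero_of_add_eq_one' hsum])

theorem compl_mul_map_corner_mul_compl (hP : IsJordanDerivableAtZero φ) (he : IsIdempotentElem e)
    (hsum : e + f = 1) (h2 : ∀ x : R, f * x * f + f * x * f = 0 → f * x * f = 0) (x : R) :
    f * φ (e * x * e) * f = 0 := by
  have hef := he.mul_eq_zero_of_add_eq_one hsum
  have hfe := he.mul_eq_zero_of_add_eq_one' hsum
  have hf := he.of_add_eq_one hsum
  have h := congrArg (f * · * f) (hP.apply_corner_compl he hsum x)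
  apply h2
  simpa only [mul_add, add_mul, mul_assoc, mul_mul_eq_of_mul_eq hf.eq, mul_mul_eq_of_mul_eq hfe,
    hef, hf.eq, zero_mul, mul_zero, add_zero] using h

theorem corner_mul_map_corner_mul_compl (hP : IsJordanDerivableAtZero φ)
    (he : IsIdempotentElem e) (hsum : e + f = 1) (x : R) :
    e * φ (e * x * e) * f + e * x * e * φ f * f = 0 := by
  have hef := he.mul_eq_zero_of_add_eq_one hsum
  have hfe := he.mul_eq_zero_of_add_eq_one' hsum
  have hf := he.of_add_eq_one hsum
  have h := congrArg (e * · * f) (hP.apply_corner_compl he hsum x)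
  simpa only [mul_add, add_mul, mul_assoc, mul_mul_eq_of_mul_eq he.eq, mul_mul_eq_of_mul_eq hf.eq,
    mul_mul_eq_of_mul_eq hef, mul_mul_eq_of_mul_eq hfe, hef, hfe, hf.eq, he.eq, mul_zero,
    zero_mul, add_zero, zero_add] using h

theorem compl_mul_map_corner_mul_corner (hP : IsJordanDerivableAtZero φ)
    (he : IsIdempotentElem e) (hsum : e + f = 1) (x : R) :
    f * φ (e * x * e) * e + f * φ f * (e * x * e) = 0 := by
  have hef := he.mul_eq_zero_of_add_eq_one hsum
  have hfe := he.mul_eq_zero_of_add_eq_one' hsum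
  have hf := he.of_add_eq_one hsum
  have h := congrArg (f * · * e) (hP.apply_corner_compl he hsum x)
  simpa only [mul_add, add_mul, mul_assoc, mul_mul_eq_of_mul_eq he.eq, mul_mul_eq_of_mul_eq hf.eq,
    mul_mul_eq_of_mul_eq hef, mul_mul_eq_of_mul_eq hfe, hef, hfe, hf.eq, he.eq, mul_zero,
    zero_mul, add_zero, zero_add] using h

theorem correctedMap_corner (hP : IsJordanDerivableAtZero φ) (he : IsIdempotentElem e)
    (hsum : e + f = 1) (h2 : ∀ x : R, f * x * f + f * x * f = 0 → f * x * f = 0) (x : R) :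
    correctedMap φ e f (e * x * e) = e * correctedMap φ e f (e * x * e) * e := by
  have hef := he.mul_eq_zero_of_add_eq_one hsum
  have hfe := he.mul_eq_zero_of_add_eq_one' hsum
  have hf := he.of_add_eq_one hsum
  have hφ1 : φ 1 = φ e + φ f := by rw [← hsum, map_add]
  have hone_ef := congrArg (e * x * e * ·) (hP.mul_map_one_mul_eq_zero he hsum)
  have hone_fe := congrArg (· * (e * x * e))
    (hP.mul_map_one_mul_eq_zero hf ((add_comm f e).trans hsum))
  have hcorner_ef := hP.corner_mul_map_corner_mul_compl he hsum x
  have hcorner_fe := hP.compl_mul_map_corner_mul_corner he hsum x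
  have hcorner_ff := hP.compl_mul_map_corner_mul_compl he hsum h2 x
  simp only [mul_add, add_mul, mul_assoc, mul_mul_eq_of_mul_eq he.eq, mul_zero, zero_mul, hφ1]
    at hone_ef hone_fe hcorner_ef hcorner_fe hcorner_ff
  unfold correctedMap offDiagonalCorrection
  apply eq_of_pierce_off_corners_eq_zero hsum <;>
    simp only [mul_add, add_mul, mul_sub, sub_mul, mul_assoc, neg_mul, mul_mul_eq_of_mul_eq he.eq,
      mul_mul_eq_of_mul_eq hf.eq, mul_mul_eq_of_mul_eq hef, mul_mul_eq_of_mul_eq hfe, hef,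
      hf.eq, he.eq, zero_mul, mul_zero, add_zero, zero_add, sub_zero, zero_sub, hφ1]
  · linear_combination (norm := abel) hcorner_ef - hone_ef
  · linear_combination (norm := abel) hcorner_fe - hone_fe
  · exact hcorner_ff

end IsJordanDerivableAtZero

end

theorem psi_preserves_diagonal_corners_general
    {R : Type*} [Ring R] (e : R) (he : e * e = e)
    (h2A : ∀ x : R, e * x * e + e * x * e = 0 → e * x * e = 0)
    (h2B : ∀ x : R, (1 - e) * x * (1 - e) + (1 - e) * x * (1 - e) = 0 →
      (1 - e) * x * (1 - e) = 0)
    (φ : R →+ R)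
    (hP : ∀ U V : R, U * V = 0 → V * U = 0 →
      φ U * V + V * φ U + U * φ V + φ V * U = 0)
    (ψ : R → R)
    (hψ : ∀ U : R, ψ U = φ U - φ 1 * U +
      ((e * φ e * (1 - e) + (1 - e) * φ (1 - e) * e) * U -
        U * (e * φ e * (1 - e) + (1 - e) * φ (1 - e) * e))) :
    (∀ a : R, a = e * a * e → ψ a = e * ψ a * e) ∧
    (∀ b : R, b = (1 - e) * b * (1 - e) → ψ b = (1 - e) * ψ b * (1 - e)) := by
  have hP' : IsJordanDerivableAtZero φ := hP
  have hψ' : ψ = correctedMap φ e (1 - e) := funext hψ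
  refine ⟨fun a ha => ?_, fun b hb => ?_⟩
  · rw [hψ', ha]
    exact hP'.correctedMap_corner he (add_sub_cancel e 1) h2B a
  · rw [hψ', correctedMap_comm, hb]
    exact hP'.correctedMap_corner (IsIdempotentElem.one_sub he) (sub_add_cancel 1 e) h2A b

theorem psi_preserves_diagonal_corners
    {R : Type*} [Ring R] (e : R) (he : e * e = e)
    (h2A : ∀ x : R, e * x * e + e * x * e = 0 → e * x * e = 0)
    (h2B : ∀ x : R, (1 - e) * x * (1 - e) + (1 - e) * x * (1 - e) = 0 →
      (1 - e) * x * (1 - e) = 0)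
    (hlf : ∀ a : R, a = e * a * e → (∀ x : R, a * (e * x * (1 - e)) = 0) → a = 0)
    (hrf : ∀ b : R, b = (1 - e) * b * (1 - e) → (∀ x : R, (e * x * (1 - e)) * b = 0) → b = 0)
    (φ : R →+ R)
    (hP : ∀ U V : R, U * V = 0 → V * U = 0 →
      φ U * V + V * φ U + U * φ V + φ V * U = 0)
    (ψ : R → R)
    (hψ : ∀ U : R, ψ U = φ U - φ 1 * U +
      ((e * φ e * (1 - e) + (1 - e) * φ (1 - e) * e) * U -
        U * (e * φ e * (1 - e) + (1 - e) * φ (1 - e) * e))) :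
    (∀ a : R, a = e * a * e → ψ a = e * ψ a * e) ∧
    (∀ b : R, b = (1 - e) * b * (1 - e) → ψ b = (1 - e) * ψ b * (1 - e)) :=
  psi_preserves_diagonal_corners_general e he h2A h2B φ hP ψ hψ
end

section
/- (Lemma 2.5(3),(4)) In the generalized matrix ring setting, let φ : R → R be an additive map satisfying condition (P), and define ψ(U) = φ(U) − φ(1)·U + T·U − U·T where T = e·φ(e)·f + f·φ(f)·e and f = 1 − e. Then for every m ∈ R with m = emf one has e·ψ(m)·e = 0 and f·ψ(m)·f = 0, and for every n ∈ R with n = fne one has e·ψ(n)·e = 0 and f·ψ(n)·f = 0. -/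
/-!
For `m ∈ eRf` (with `f = 1 - e`) the pairs `(e, f)`, `(m, m)` and `(e + m, f - m)` are all
orthogonal. Since `(U, V) ↦ φ(U) ∘ V + U ∘ φ(V)` is biadditive, the three instances of (P)
combine to `φ(m) ∘ f + m ∘ φ(f) = φ(e) ∘ m + e ∘ φ(m)`. Compressing this identity to the corners
`e(·)e` and `f(·)f`, and eliminating `m φ(f) e` and `f φ(f) m` with the compressions `m(·)e` and
`f(·)m` of `φ(e) ∘ f + e ∘ φ(f) = 0`, gives `2 eψ(m)e = 0` and `2 fψ(m)f = 0`. The case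
`n ∈ fRe` is the same statement with `e` and `f` interchanged, as `ψ` is symmetric in them.
-/

section

variable {R : Type*} [Ring R]

def jordanLeibniz (φ : R →+ R) (U V : R) : R := φ U * V + V * φ U + U * φ V + φ V * U

def offDiagCorrection (φ : R →+ R) (e f : R) : R := e * φ e * f + f * φ f * e

def psiMap (φ : R →+ R) (e f U : R) : R :=
  φ U - φ 1 * U + (offDiagCorrection φ e f * U - U * offDiagCorrection φ e f)

theorem psiMap_comm (φ : R →+ R) (e f : R) : psiMap φ e f = psiMap φ f e := by
  funext U
  simp only [psiMap, offDiagCorrection, add_comm (e * φ e * f)]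

theorem IsIdempotentElem.offDiag_mul_relations {e f m : R} (he : IsIdempotentElem e)
    (hf : f = 1 - e) (hm : m = e * m * f) :
    e * f = 0 ∧ f * e = 0 ∧ e * m = m ∧ m * e = 0 ∧ m * f = m ∧ f * m = 0 := by
  have hef : e * f = 0 := hf ▸ he.mul_one_sub_self
  have hfe : f * e = 0 := hf ▸ he.one_sub_mul_self
  have hff : f * f = f := hf ▸ he.one_sub.eq
  refine ⟨hef, hfe, ?_, ?_, ?_, ?_⟩ <;> rw [hm]
  · rw [← mul_assoc, ← mul_assoc, he.eq]
  · rw [mul_assoc, hfe, mul_zero]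
  · rw [mul_assoc, hff]
  · rw [← mul_assoc, ← mul_assoc, hfe, zero_mul, zero_mul]

theorem jordanLeibniz_offDiag_eq {φ : R →+ R} {e f m : R}
    (hP : ∀ U V : R, U * V = 0 → V * U = 0 → jordanLeibniz φ U V = 0)
    (he : IsIdempotentElem e) (hf : f = 1 - e) (hm : m = e * m * f) :
    jordanLeibniz φ m f = jordanLeibniz φ e m := by
  obtain ⟨hef, hfe, hem, hme, hmf, hfm⟩ := he.offDiag_mul_relations hf hm
  have hmm : m * m = 0 := by nth_rw 1 [← hmf]; rw [mul_assoc, hfm, mul_zero]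
  have hpair := hP (e + m) (f - m)
    (by linear_combination (norm := noncomm_ring) hef - hem + hmf - hmm)
    (by linear_combination (norm := noncomm_ring) hfe + hfm - hme - hmm)
  have hdiag := hP e f hef hfe
  have hsquare := hP m m hmm hmm
  simp only [jordanLeibniz, map_add, map_sub] at hpair hdiag hsquare ⊢
  linear_combination (norm := noncomm_ring) hpair - hdiag + hsquare

theorem corner_left_psiMap_add_self_eq_zero {φ : R →+ R} {e f m : R}
    (hP : ∀ U V : R, U * V = 0 → V * U = 0 → jordanLeibniz φ U V = 0)
    (he : IsIdempotentElem e) (hf : f = 1 - e) (hm : m = e * m * f) :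
    e * psiMap φ e f m * e + e * psiMap φ e f m * e = 0 := by
  obtain ⟨hef, hfe, hem, hme, hmf, -⟩ := he.offDiag_mul_relations hf hm
  have hL := jordanLeibniz_offDiag_eq hP he hf hm
  have hdiag := hP e f hef hfe
  have hφ1 : φ 1 = φ e + φ f := by rw [← map_add, hf, add_sub_cancel]
  simp only [psiMap, offDiagCorrection, jordanLeibniz, hφ1] at hL hdiag ⊢
  linear_combination (norm := skip) -(e * hL * e) - m * hdiag * e
  -- reduce right-associated monomials with the Peirce relations
  simp only [mul_add, add_mul, mul_sub, sub_mul, mul_assoc, he.eq, hfe, hem, hme,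
    mul_mul_eq_of_mul_eq he.eq, mul_mul_eq_of_mul_eq hef, mul_mul_eq_of_mul_eq hem,
    mul_mul_eq_of_mul_eq hme, mul_mul_eq_of_mul_eq hmf, zero_mul, mul_zero]
  abel

theorem corner_right_psiMap_add_self_eq_zero {φ : R →+ R} {e f m : R}
    (hP : ∀ U V : R, U * V = 0 → V * U = 0 → jordanLeibniz φ U V = 0)
    (he : IsIdempotentElem e) (hf : f = 1 - e) (hm : m = e * m * f) :
    f * psiMap φ e f m * f + f * psiMap φ e f m * f = 0 := by
  obtain ⟨hef, hfe, hem, -, hmf, hfm⟩ := he.offDiag_mul_relations hf hm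
  have hff : f * f = f := hf ▸ he.one_sub.eq
  have hL := jordanLeibniz_offDiag_eq hP he hf hm
  have hdiag := hP e f hef hfe
  have hφ1 : φ 1 = φ e + φ f := by rw [← map_add, hf, add_sub_cancel]
  simp only [psiMap, offDiagCorrection, jordanLeibniz, hφ1] at hL hdiag ⊢
  linear_combination (norm := skip) f * hL * f - f * hdiag * m
  simp only [mul_add, add_mul, mul_sub, sub_mul, mul_assoc, hff, hef, hem, hmf, hfm,
    mul_mul_eq_of_mul_eq hff, mul_mul_eq_of_mul_eq hfe,
    mul_mul_eq_of_mul_eq hmf, mul_mul_eq_of_mul_eq hfm, zero_mul, mul_zero]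
  abel

end

theorem psi_offdiagonal_corners_vanish_general
    {R : Type*} [Ring R] (e : R) (he : e * e = e)
    (h2A : ∀ x : R, e * x * e + e * x * e = 0 → e * x * e = 0)
    (h2B : ∀ x : R, (1 - e) * x * (1 - e) + (1 - e) * x * (1 - e) = 0 →
      (1 - e) * x * (1 - e) = 0)
    (φ : R →+ R)
    (hP : ∀ U V : R, U * V = 0 → V * U = 0 →
      φ U * V + V * φ U + U * φ V + φ V * U = 0)
    (ψ : R → R)
    (hψ : ∀ U : R, ψ U = φ U - φ 1 * U +
      ((e * φ e * (1 - e) + (1 - e) * φ (1 - e) * e) * U -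
        U * (e * φ e * (1 - e) + (1 - e) * φ (1 - e) * e))) :
    (∀ m : R, m = e * m * (1 - e) →
      e * ψ m * e = 0 ∧ (1 - e) * ψ m * (1 - e) = 0) ∧
    (∀ n : R, n = (1 - e) * n * e →
      e * ψ n * e = 0 ∧ (1 - e) * ψ n * (1 - e) = 0) := by
  obtain rfl : ψ = psiMap φ e (1 - e) := funext hψ
  have he' : IsIdempotentElem (1 - e) := IsIdempotentElem.one_sub he
  have hcompl : e = 1 - (1 - e) := (sub_sub_cancel 1 e).symm
  refine ⟨fun m hm => ⟨h2A _ ?_, h2B _ ?_⟩, fun n hn => ⟨h2A _ ?_, h2B _ ?_⟩⟩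
  · exact corner_left_psiMap_add_self_eq_zero hP he rfl hm
  · exact corner_right_psiMap_add_self_eq_zero hP he rfl hm
  · exact psiMap_comm φ e (1 - e) ▸ corner_right_psiMap_add_self_eq_zero hP he' hcompl hn
  · exact psiMap_comm φ e (1 - e) ▸ corner_left_psiMap_add_self_eq_zero hP he' hcompl hn

theorem psi_offdiagonal_corners_vanish
    {R : Type*} [Ring R] (e : R) (he : e * e = e)
    (h2A : ∀ x : R, e * x * e + e * x * e = 0 → e * x * e = 0)
    (h2B : ∀ x : R, (1 - e) * x * (1 - e) + (1 - e) * x * (1 - e) = 0 →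
      (1 - e) * x * (1 - e) = 0)
    (hlf : ∀ a : R, a = e * a * e → (∀ x : R, a * (e * x * (1 - e)) = 0) → a = 0)
    (hrf : ∀ b : R, b = (1 - e) * b * (1 - e) → (∀ x : R, (e * x * (1 - e)) * b = 0) → b = 0)
    (φ : R →+ R)
    (hP : ∀ U V : R, U * V = 0 → V * U = 0 →
      φ U * V + V * φ U + U * φ V + φ V * U = 0)
    (ψ : R → R)
    (hψ : ∀ U : R, ψ U = φ U - φ 1 * U +
      ((e * φ e * (1 - e) + (1 - e) * φ (1 - e) * e) * U -
        U * (e * φ e * (1 - e) + (1 - e) * φ (1 - e) * e))) :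
    (∀ m : R, m = e * m * (1 - e) →
      e * ψ m * e = 0 ∧ (1 - e) * ψ m * (1 - e) = 0) ∧
    (∀ n : R, n = (1 - e) * n * e →
      e * ψ n * e = 0 ∧ (1 - e) * ψ n * (1 - e) = 0) :=
  psi_offdiagonal_corners_vanish_general e he h2A h2B φ hP ψ hψ
end

section
/- (Theorem 2.1, additional part) In the generalized matrix ring setting, if φ : R → R is an additive map satisfying condition (P) and φ(1) = 0, then φ is a Jordan derivation: φ(U²) = φ(U)·U + U·φ(U) for every U ∈ R. -/
/-!
For an additive map `ψ` write `J x y = ψ (x ∘ y) - (ψ x ∘ y + x ∘ ψ y)` (`jordanDefect`)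
and `Q x = ψ (x * x) - (ψ x * x + x * ψ x)` (`squareDefect`). Condition (P) says that `J`
vanishes on orthogonal pairs, `Q (x + y) = Q x + Q y + J x y`, and the claim is `Q = 0`.

Applying (P) to an idempotent `p` and `1 - p` gives `2 Q p = 0`; hence `4 J x y = 0` and
`4 (Q x + Q y) = 0` whenever `x + y` and `x - y` are both idempotent. Subtracting an inner
derivation from `φ`, one may assume `ψ e = 0`. With `f = 1 - e`, the idempotents `e ± m`
(`m ∈ eRf`), the conjugates `(1 ± m) (e + n) (1 ∓ m)` (`n ∈ fRe`), a few orthogonal pairs and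
2-torsion-freeness of `eRe` and `fRf` show that `Q` vanishes on `eRf` and `fRe` and that `J`
vanishes on every pair of Peirce components not lying in the same diagonal corner. On `eRe`,
expanding `ψ (a c m)` in two ways and using faithfulness of `eRf` shows that `ψ` is a
derivation, and likewise on `fRf`. Splitting `x` into its four Peirce components then gives
`Q x = 0`.
-/

section

variable {R : Type*} [Ring R]

def peirceSpace (p q : R) : AddSubgroup R where
  carrier := {x | x = p * x * q}
  add_mem' {x y} (hx : x = p * x * q) (hy : y = p * y * q) := by
    show x + y = p * (x + y) * q
    rw [mul_add, add_mul, ← hx, ← hy]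
  zero_mem' := by show (0 : R) = p * 0 * q; rw [mul_zero, zero_mul]
  neg_mem' {x} (hx : x = p * x * q) := by
    show -x = p * -x * q
    rw [mul_neg, neg_mul, ← hx]

section peirceSpace

variable {p q q' r x y : R}

theorem mem_peirceSpace : x ∈ peirceSpace p q ↔ x = p * x * q := Iff.rfl

theorem mul_mul_mem_peirceSpace (hp : IsIdempotentElem p) (hq : IsIdempotentElem q) (x : R) :
    p * x * q ∈ peirceSpace p q :=
  calc p * x * q = (p * p) * x * (q * q) := by rw [hp.eq, hq.eq]
    _ = p * (p * x * q) * q := by noncomm_ring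

theorem left_mul_of_mem_peirceSpace (hp : IsIdempotentElem p) (hx : x ∈ peirceSpace p q) :
    p * x = x := by
  rw [mem_peirceSpace.mp hx, ← mul_assoc, ← mul_assoc, hp.eq]

theorem mul_right_of_mem_peirceSpace (hq : IsIdempotentElem q) (hx : x ∈ peirceSpace p q) :
    x * q = x := by
  rw [mem_peirceSpace.mp hx, mul_assoc, hq.eq]

theorem mul_mem_peirceSpace (hp : IsIdempotentElem p) (hr : IsIdempotentElem r)
    (hx : x ∈ peirceSpace p q) (hy : y ∈ peirceSpace q' r) : x * y ∈ peirceSpace p r := by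
  rw [mem_peirceSpace, mul_assoc, mul_assoc, ← mul_assoc p, left_mul_of_mem_peirceSpace hp hx,
    mul_right_of_mem_peirceSpace hr hy]

end peirceSpace

structure PeircePair (e f : R) : Prop where
  idem_left : IsIdempotentElem e
  idem_right : IsIdempotentElem f
  left_mul_right : e * f = 0
  right_mul_left : f * e = 0
  add_eq_one : e + f = 1

namespace PeircePair

variable {e f : R}

theorem symm (h : PeircePair e f) : PeircePair f e :=
  ⟨h.idem_right, h.idem_left, h.right_mul_left, h.left_mul_right,
    by rw [add_comm, h.add_eq_one]⟩

theorem one_sub (he : IsIdempotentElem e) : PeircePair e (1 - e) where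
  idem_left := he
  idem_right := he.one_sub
  left_mul_right := by rw [mul_sub, mul_one, he.eq, sub_self]
  right_mul_left := by rw [sub_mul, one_mul, he.eq, sub_self]
  add_eq_one := add_sub_cancel e 1

/-- The multiplication table of `e` and `f`, in the right-associated normal form of
`noncomm_ring`. With elements of Peirce spaces written as `p * x * q`, this lets `noncomm_ring`
decide identities between Peirce components. -/
theorem mul_rules (h : PeircePair e f) :
    (e * e = e ∧ f * f = f ∧ e * f = 0 ∧ f * e = 0) ∧
      ∀ z, e * (e * z) = e * z ∧ f * (f * z) = f * z ∧
        e * (f * z) = 0 ∧ f * (e * z) = 0 := by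
  refine ⟨⟨h.idem_left, h.idem_right, h.left_mul_right, h.right_mul_left⟩, fun z => ?_⟩
  simp only [← mul_assoc, h.idem_left.eq, h.idem_right.eq, h.left_mul_right, h.right_mul_left,
    zero_mul, and_self]

theorem eq_add_corners (h : PeircePair e f) (x : R) :
    x = e * x * e + e * x * f + f * x * e + f * x * f :=
  calc x = (e + f) * x * (e + f) := by rw [h.add_eq_one, one_mul, mul_one]
    _ = _ := by noncomm_ring

theorem eq_zero_of_corners (h : PeircePair e f) {x : R} (hee : e * x * e = 0)
    (hef : e * x * f = 0) (hfe : f * x * e = 0) (hff : f * x * f = 0) : x = 0 := by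
  rw [h.eq_add_corners x, hee, hef, hfe, hff, add_zero, add_zero, add_zero]

end PeircePair

def CornerTwoTorsionFree (e : R) : Prop :=
  ∀ x : R, e * x * e + e * x * e = 0 → e * x * e = 0

namespace CornerTwoTorsionFree

variable {e : R}

theorem corner_eq_zero_of_two_nsmul (h : CornerTwoTorsionFree e) {x : R} (hx : 2 • x = 0) :
    e * x * e = 0 := by
  have h2 : e * (2 • x) * e = 0 := by rw [hx, mul_zero, zero_mul]
  exact h x (by rwa [two_nsmul, mul_add, add_mul] at h2)

theorem corner_eq_zero_of_four_nsmul (h : CornerTwoTorsionFree e) {x : R} (hx : 4 • x = 0) :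
    e * x * e = 0 := by
  have h2 : e * (2 • x) * e = 0 := h.corner_eq_zero_of_two_nsmul (by rw [smul_smul]; exact hx)
  exact h x (by rwa [two_nsmul, mul_add, add_mul] at h2)

end CornerTwoTorsionFree

theorem eq_zero_of_eq_mul_mul {L X : R} (hL : L = 0) (p q : R) (h : X = p * L * q) : X = 0 := by
  rw [h, hL, mul_zero, zero_mul]

def IsJordanDerivationOnOrthogonal (φ : R →+ R) : Prop :=
  ∀ U V : R, U * V = 0 → V * U = 0 → φ U * V + V * φ U + U * φ V + φ V * U = 0

def jordanDefect (ψ : R →+ R) (x y : R) : R :=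
  ψ (x * y + y * x) - (ψ x * y + y * ψ x + x * ψ y + ψ y * x)

def squareDefect (ψ : R →+ R) (x : R) : R :=
  ψ (x * x) - (ψ x * x + x * ψ x)

section Defects

variable (ψ : R →+ R) (x y z : R)

theorem jordanDefect_comm : jordanDefect ψ x y = jordanDefect ψ y x := by
  unfold jordanDefect; rw [add_comm (y * x)]; abel

theorem jordanDefect_add_left :
    jordanDefect ψ (x + y) z = jordanDefect ψ x z + jordanDefect ψ y z := by
  unfold jordanDefect; simp only [map_add, add_mul, mul_add]; abel

theorem jordanDefect_sub_left :
    jordanDefect ψ (x - y) z = jordanDefect ψ x z - jordanDefect ψ y z := by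
  unfold jordanDefect; simp only [map_add, map_sub, sub_mul, mul_sub]; abel

theorem jordanDefect_sub_right :
    jordanDefect ψ x (y - z) = jordanDefect ψ x y - jordanDefect ψ x z := by
  rw [jordanDefect_comm, jordanDefect_sub_left, jordanDefect_comm ψ y, jordanDefect_comm ψ z]

theorem squareDefect_add :
    squareDefect ψ (x + y) = squareDefect ψ x + squareDefect ψ y + jordanDefect ψ x y := by
  unfold squareDefect jordanDefect; simp only [map_add, add_mul, mul_add]; abel

theorem squareDefect_sub :
    squareDefect ψ (x - y) = squareDefect ψ x + squareDefect ψ y - jordanDefect ψ x y := by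
  unfold squareDefect jordanDefect; simp only [map_sub, map_add, sub_mul, mul_sub]; abel

end Defects

namespace IsJordanDerivationOnOrthogonal

variable {ψ : R →+ R}

theorem jordanDefect_eq_zero (hP : IsJordanDerivationOnOrthogonal ψ) {U V : R} (hUV : U * V = 0)
    (hVU : V * U = 0) : jordanDefect ψ U V = 0 := by
  rw [jordanDefect, hUV, hVU, add_zero, map_zero, hP U V hUV hVU, sub_zero]

theorem two_nsmul_squareDefect (hP : IsJordanDerivationOnOrthogonal ψ) (h1 : ψ 1 = 0) {p : R}
    (hp : IsIdempotentElem p) : 2 • squareDefect ψ p = 0 := by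
  have E := hP p (1 - p) (by rw [mul_sub, mul_one, hp.eq, sub_self])
    (by rw [sub_mul, one_mul, hp.eq, sub_self])
  rw [map_sub, h1, zero_sub] at E
  rw [← E, squareDefect, hp.eq]
  noncomm_ring

theorem four_nsmul_jordanDefect (hP : IsJordanDerivationOnOrthogonal ψ) (h1 : ψ 1 = 0) {x y : R}
    (hadd : IsIdempotentElem (x + y)) (hsub : IsIdempotentElem (x - y)) :
    4 • jordanDefect ψ x y = 0 :=
  calc 4 • jordanDefect ψ x y
        = 2 • squareDefect ψ (x + y) - 2 • squareDefect ψ (x - y) := by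
        rw [squareDefect_add, squareDefect_sub]; abel
    _ = 0 := by rw [hP.two_nsmul_squareDefect h1 hadd, hP.two_nsmul_squareDefect h1 hsub, sub_zero]

theorem four_nsmul_squareDefect_add (hP : IsJordanDerivationOnOrthogonal ψ) (h1 : ψ 1 = 0)
    {x y : R} (hadd : IsIdempotentElem (x + y)) (hsub : IsIdempotentElem (x - y)) :
    4 • (squareDefect ψ x + squareDefect ψ y) = 0 :=
  calc 4 • (squareDefect ψ x + squareDefect ψ y)
        = 2 • squareDefect ψ (x + y) + 2 • squareDefect ψ (x - y) := by
        rw [squareDefect_add, squareDefect_sub]; abel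
    _ = 0 := by rw [hP.two_nsmul_squareDefect h1 hadd, hP.two_nsmul_squareDefect h1 hsub, add_zero]

end IsJordanDerivationOnOrthogonal

structure IsPeirceNormalized (ψ : R →+ R) (e f : R) : Prop where
  pair : PeircePair e f
  orthogonal : IsJordanDerivationOnOrthogonal ψ
  map_one : ψ 1 = 0
  map_left : ψ e = 0

namespace IsPeirceNormalized

variable {ψ : R →+ R} {e f : R}

theorem map_right (h : IsPeirceNormalized ψ e f) : ψ f = 0 := by
  have h1 := h.map_one
  rwa [← h.pair.add_eq_one, map_add, h.map_left, zero_add] at h1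

theorem symm (h : IsPeirceNormalized ψ e f) : IsPeirceNormalized ψ f e :=
  ⟨h.pair.symm, h.orthogonal, h.map_one, h.map_right⟩

theorem map_mem_diag (h : IsPeirceNormalized ψ e f) (hf2 : CornerTwoTorsionFree f) {a : R}
    (ha : a ∈ peirceSpace e e) : ψ a ∈ peirceSpace e e := by
  have hef := h.pair
  obtain ⟨x, rfl⟩ : ∃ x, a = e * x * e := ⟨a, ha⟩
  have E := h.orthogonal (e * x * e) f (by noncomm_ring [hef.mul_rules])
    (by noncomm_ring [hef.mul_rules])
  rw [h.map_right, mul_zero, zero_mul, add_zero, add_zero] at E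
  have hff : f * ψ (e * x * e) * f = 0 :=
    hf2 _ (eq_zero_of_eq_mul_mul E f f (by noncomm_ring [hef.mul_rules]))
  rw [mem_peirceSpace, ← sub_eq_zero]
  refine hef.eq_zero_of_corners ?_ ?_ ?_ ?_
  · noncomm_ring [hef.mul_rules]
  · exact eq_zero_of_eq_mul_mul E e f (by noncomm_ring [hef.mul_rules])
  · exact eq_zero_of_eq_mul_mul E f e (by noncomm_ring [hef.mul_rules])
  · exact eq_zero_of_eq_mul_mul hff 1 1 (by noncomm_ring [hef.mul_rules])

theorem map_offDiag (h : IsPeirceNormalized ψ e f) (he2 : CornerTwoTorsionFree e)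
    (hf2 : CornerTwoTorsionFree f) {m : R} (hm : m ∈ peirceSpace e f) :
    ψ m = e * ψ m * f + f * ψ m * e := by
  have hef := h.pair
  obtain ⟨y, rfl⟩ : ∃ y, m = e * y * f := ⟨m, hm⟩
  have hJ : 4 • jordanDefect ψ e (e * y * f) = 0 :=
    h.orthogonal.four_nsmul_jordanDefect h.map_one
      (by noncomm_ring [IsIdempotentElem, hef.mul_rules])
      (by noncomm_ring [IsIdempotentElem, hef.mul_rules])
  rw [← sub_eq_zero]
  refine hef.eq_zero_of_corners ?_ ?_ ?_ ?_
  · exact eq_zero_of_eq_mul_mul (he2.corner_eq_zero_of_four_nsmul hJ) (-1) 1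
      (by noncomm_ring [jordanDefect, hef.mul_rules, h.map_left])
  · noncomm_ring [hef.mul_rules]
  · noncomm_ring [hef.mul_rules]
  · exact eq_zero_of_eq_mul_mul (hf2.corner_eq_zero_of_four_nsmul hJ) 1 1
      (by noncomm_ring [jordanDefect, hef.mul_rules, h.map_left])

theorem squareDefect_offDiag (h : IsPeirceNormalized ψ e f) (he2 : CornerTwoTorsionFree e)
    (hf2 : CornerTwoTorsionFree f) {m : R} (hm : m ∈ peirceSpace e f) :
    squareDefect ψ m = 0 := by
  have hef := h.pair
  obtain ⟨y, rfl⟩ : ∃ y, m = e * y * f := ⟨m, hm⟩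
  have h4 := h.orthogonal.four_nsmul_squareDefect_add h.map_one (x := e) (y := e * y * f)
    (by noncomm_ring [IsIdempotentElem, hef.mul_rules])
    (by noncomm_ring [IsIdempotentElem, hef.mul_rules])
  rw [squareDefect, hef.idem_left.eq, h.map_left, zero_mul, mul_zero, add_zero, sub_zero,
    zero_add] at h4
  obtain ⟨v, w, hv⟩ : ∃ v w, ψ (e * y * f) = e * v * f + f * w * e :=
    ⟨_, _, h.map_offDiag he2 hf2 hm⟩
  refine hef.eq_zero_of_corners (he2.corner_eq_zero_of_four_nsmul h4) ?_ ?_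
    (hf2.corner_eq_zero_of_four_nsmul h4)
  · rw [squareDefect, hv]; noncomm_ring [hef.mul_rules, map_zero]
  · rw [squareDefect, hv]; noncomm_ring [hef.mul_rules, map_zero]

theorem map_corner (h : IsPeirceNormalized ψ e f) (he2 : CornerTwoTorsionFree e)
    (hf2 : CornerTwoTorsionFree f) (z : R) : ψ (e * z * e) = e * ψ z * e := by
  have hef := h.pair
  have hz : ψ z = ψ (e * z * e) + ψ (e * z * f) + ψ (f * z * e) + ψ (f * z * f) := by
    rw [← map_add, ← map_add, ← map_add, ← hef.eq_add_corners]
  obtain ⟨u₁, hu₁⟩ : ∃ u, ψ (e * z * e) = e * u * e :=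
    ⟨_, h.map_mem_diag hf2 (mul_mul_mem_peirceSpace hef.idem_left hef.idem_left z)⟩
  obtain ⟨v₁, w₁, hv₁⟩ : ∃ v w, ψ (e * z * f) = e * v * f + f * w * e :=
    ⟨_, _, h.map_offDiag he2 hf2 (mul_mul_mem_peirceSpace hef.idem_left hef.idem_right z)⟩
  obtain ⟨v₂, w₂, hv₂⟩ : ∃ v w, ψ (f * z * e) = f * v * e + e * w * f :=
    ⟨_, _, h.symm.map_offDiag hf2 he2 (mul_mul_mem_peirceSpace hef.idem_right hef.idem_left z)⟩
  obtain ⟨u₂, hu₂⟩ : ∃ u, ψ (f * z * f) = f * u * f :=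
    ⟨_, h.symm.map_mem_diag he2 (mul_mul_mem_peirceSpace hef.idem_right hef.idem_right z)⟩
  rw [hz, hu₁, hv₁, hv₂, hu₂]
  noncomm_ring [hef.mul_rules]

theorem jordanDefect_left_eq_zero (h : IsPeirceNormalized ψ e f) (he2 : CornerTwoTorsionFree e)
    (hf2 : CornerTwoTorsionFree f) (z : R) : jordanDefect ψ e z = 0 := by
  have key : ∀ x : R, e * x + x * e = x + e * x * e - f * x * f := by
    intro x; rw [eq_sub_of_add_eq' h.pair.add_eq_one]; noncomm_ring
  rw [jordanDefect, h.map_left, zero_mul, mul_zero, add_zero, zero_add, key, key, map_sub, map_add,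
    h.map_corner he2 hf2, h.symm.map_corner hf2 he2, sub_self]

theorem jordanDefect_ee_ef (h : IsPeirceNormalized ψ e f) (he2 : CornerTwoTorsionFree e)
    (hf2 : CornerTwoTorsionFree f) {a m : R} (ha : a ∈ peirceSpace e e)
    (hm : m ∈ peirceSpace e f) : jordanDefect ψ a m = 0 := by
  have hef := h.pair
  obtain ⟨u, hu⟩ : ∃ u, ψ a = e * u * e := ⟨_, h.map_mem_diag hf2 ha⟩
  obtain ⟨v, w, hv⟩ : ∃ v w, ψ m = e * v * f + f * w * e :=
    ⟨_, _, h.map_offDiag he2 hf2 hm⟩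
  obtain ⟨v', w', hw⟩ : ∃ v w, ψ (a * m) = e * v * f + f * w * e :=
    ⟨_, _, h.map_offDiag he2 hf2 (mul_mem_peirceSpace hef.idem_left hef.idem_right ha hm)⟩
  obtain ⟨x, rfl⟩ : ∃ x, a = e * x * e := ⟨a, ha⟩
  obtain ⟨y, rfl⟩ : ∃ y, m = e * y * f := ⟨m, hm⟩
  have E := h.orthogonal (f - e * y * f) (e * x * e + e * x * e * (e * y * f))
    (by noncomm_ring [hef.mul_rules]) (by noncomm_ring [hef.mul_rules])
  rw [map_sub, map_add, h.map_right, hu, hv, hw] at E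
  rw [jordanDefect, map_add, hu, hv, hw]
  refine hef.eq_zero_of_corners ?_ ?_ ?_ ?_
  · noncomm_ring [hef.mul_rules, map_zero]
  · exact eq_zero_of_eq_mul_mul E e f (by noncomm_ring [hef.mul_rules, map_zero])
  · exact eq_zero_of_eq_mul_mul E f e (by noncomm_ring [hef.mul_rules, map_zero])
  · noncomm_ring [hef.mul_rules, map_zero]

theorem jordanDefect_ef_ff (h : IsPeirceNormalized ψ e f) (he2 : CornerTwoTorsionFree e)
    (hf2 : CornerTwoTorsionFree f) {m b : R} (hm : m ∈ peirceSpace e f)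
    (hb : b ∈ peirceSpace f f) : jordanDefect ψ m b = 0 := by
  have hef := h.pair
  obtain ⟨u, hu⟩ : ∃ u, ψ b = f * u * f := ⟨_, h.symm.map_mem_diag he2 hb⟩
  obtain ⟨v, w, hv⟩ : ∃ v w, ψ m = e * v * f + f * w * e :=
    ⟨_, _, h.map_offDiag he2 hf2 hm⟩
  obtain ⟨v', w', hw⟩ : ∃ v w, ψ (m * b) = e * v * f + f * w * e :=
    ⟨_, _, h.map_offDiag he2 hf2 (mul_mem_peirceSpace hef.idem_left hef.idem_right hm hb)⟩
  obtain ⟨x, rfl⟩ : ∃ x, b = f * x * f := ⟨b, hb⟩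
  obtain ⟨y, rfl⟩ : ∃ y, m = e * y * f := ⟨m, hm⟩
  have E := h.orthogonal (e - e * y * f) (f * x * f + e * y * f * (f * x * f))
    (by noncomm_ring [hef.mul_rules]) (by noncomm_ring [hef.mul_rules])
  rw [map_sub, map_add, h.map_left, hu, hv, hw] at E
  rw [jordanDefect, map_add, hu, hv, hw]
  refine hef.eq_zero_of_corners ?_ ?_ ?_ ?_
  · noncomm_ring [hef.mul_rules, map_zero]
  · exact eq_zero_of_eq_mul_mul E e f (by noncomm_ring [hef.mul_rules, map_zero])
  · exact eq_zero_of_eq_mul_mul E f e (by noncomm_ring [hef.mul_rules, map_zero])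
  · noncomm_ring [hef.mul_rules, map_zero]

theorem jordanDefect_ef_ef (h : IsPeirceNormalized ψ e f) (he2 : CornerTwoTorsionFree e)
    (hf2 : CornerTwoTorsionFree f) {m m' : R} (hm : m ∈ peirceSpace e f)
    (hm' : m' ∈ peirceSpace e f) : jordanDefect ψ m m' = 0 := by
  have hsq := squareDefect_add ψ m m'
  rwa [h.squareDefect_offDiag he2 hf2 (add_mem hm hm'), h.squareDefect_offDiag he2 hf2 hm,
    h.squareDefect_offDiag he2 hf2 hm', zero_add, zero_add, eq_comm] at hsq

theorem jordanDefect_ef_fe (h : IsPeirceNormalized ψ e f) (he2 : CornerTwoTorsionFree e)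
    (hf2 : CornerTwoTorsionFree f) {m n : R} (hm : m ∈ peirceSpace e f)
    (hn : n ∈ peirceSpace f e) : jordanDefect ψ m n = 0 := by
  have hef := h.pair
  have hmn : m * n ∈ peirceSpace e e := mul_mem_peirceSpace hef.idem_left hef.idem_left hm hn
  have hnm : n * m ∈ peirceSpace f f := mul_mem_peirceSpace hef.idem_right hef.idem_right hn hm
  have hmnm : m * n * m ∈ peirceSpace e f :=
    mul_mem_peirceSpace hef.idem_left hef.idem_right hmn hm
  -- `e + n - m n m ± (m n - m - n m)` are the conjugates `(1 ± m) (e + n) (1 ∓ m)` of `e + n`.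
  have h4 : 4 • jordanDefect ψ (e + n - m * n * m) (m * n - m - n * m) = 0 := by
    obtain ⟨y, rfl⟩ : ∃ y, m = e * y * f := ⟨m, hm⟩
    obtain ⟨z, rfl⟩ : ∃ z, n = f * z * e := ⟨n, hn⟩
    exact h.orthogonal.four_nsmul_jordanDefect h.map_one
      (by noncomm_ring [IsIdempotentElem, hef.mul_rules])
      (by noncomm_ring [IsIdempotentElem, hef.mul_rules])
  have hnnm : jordanDefect ψ n (n * m) = 0 :=
    (jordanDefect_comm ψ _ _).trans (h.symm.jordanDefect_ee_ef hf2 he2 hnm hn)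
  have hmnmmn : jordanDefect ψ (m * n * m) (m * n) = 0 :=
    (jordanDefect_comm ψ _ _).trans (h.jordanDefect_ee_ef he2 hf2 hmn hmnm)
  simp only [jordanDefect_add_left, jordanDefect_sub_left, jordanDefect_sub_right,
    h.jordanDefect_left_eq_zero he2 hf2, h.symm.jordanDefect_ef_ff hf2 he2 hn hmn, hnnm,
    hmnmmn, h.jordanDefect_ef_ef he2 hf2 hmnm hm, h.jordanDefect_ef_ff he2 hf2 hmnm hnm,
    sub_zero, zero_sub, zero_add, sub_self, smul_neg, neg_eq_zero] at h4
  rw [jordanDefect_comm] at h4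
  obtain ⟨s, hs⟩ : ∃ s, ψ (m * n) = e * s * e := ⟨_, h.map_mem_diag hf2 hmn⟩
  obtain ⟨t, ht⟩ : ∃ t, ψ (n * m) = f * t * f := ⟨_, h.symm.map_mem_diag he2 hnm⟩
  obtain ⟨v, w, hv⟩ : ∃ v w, ψ m = e * v * f + f * w * e :=
    ⟨_, _, h.map_offDiag he2 hf2 hm⟩
  obtain ⟨v', w', hw⟩ : ∃ v w, ψ n = f * v * e + e * w * f :=
    ⟨_, _, h.symm.map_offDiag hf2 he2 hn⟩
  refine hef.eq_zero_of_corners (he2.corner_eq_zero_of_four_nsmul h4) ?_ ?_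
    (hf2.corner_eq_zero_of_four_nsmul h4)
  all_goals
    rw [jordanDefect, map_add, hs, ht, hv, hw]
    obtain ⟨y, rfl⟩ : ∃ y, m = e * y * f := ⟨m, hm⟩
    obtain ⟨z, rfl⟩ : ∃ z, n = f * z * e := ⟨n, hn⟩
    noncomm_ring [hef.mul_rules]

theorem map_mul_ee_ee (h : IsPeirceNormalized ψ e f) (he2 : CornerTwoTorsionFree e)
    (hf2 : CornerTwoTorsionFree f)
    (hlf : ∀ a ∈ peirceSpace e e, (∀ x : R, a * (e * x * f) = 0) → a = 0) {a c : R}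
    (ha : a ∈ peirceSpace e e) (hc : c ∈ peirceSpace e e) :
    ψ (a * c) = ψ a * c + a * ψ c := by
  have hef := h.pair
  have hac : a * c ∈ peirceSpace e e := mul_mem_peirceSpace hef.idem_left hef.idem_left ha hc
  rw [← sub_eq_zero]
  refine hlf _ (sub_mem (h.map_mem_diag hf2 hac) (add_mem
    (mul_mem_peirceSpace hef.idem_left hef.idem_left (h.map_mem_diag hf2 ha) hc)
    (mul_mem_peirceSpace hef.idem_left hef.idem_left ha (h.map_mem_diag hf2 hc)))) fun x => ?_
  have hm : e * x * f ∈ peirceSpace e f := mul_mul_mem_peirceSpace hef.idem_left hef.idem_right x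
  have hJ : jordanDefect ψ (a * c) (e * x * f) - jordanDefect ψ a (c * (e * x * f))
      - a * jordanDefect ψ c (e * x * f) = 0 := by
    rw [h.jordanDefect_ee_ef he2 hf2 hac hm, h.jordanDefect_ee_ef he2 hf2 hc hm,
      h.jordanDefect_ee_ef he2 hf2 ha
        (mul_mem_peirceSpace hef.idem_left hef.idem_right hc hm), mul_zero, sub_zero, sub_zero]
  obtain ⟨u, hu⟩ : ∃ u, ψ a = e * u * e := ⟨_, h.map_mem_diag hf2 ha⟩
  obtain ⟨u', hu'⟩ : ∃ u, ψ c = e * u * e := ⟨_, h.map_mem_diag hf2 hc⟩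
  obtain ⟨u'', hu''⟩ : ∃ u, ψ (a * c) = e * u * e := ⟨_, h.map_mem_diag hf2 hac⟩
  rw [jordanDefect, jordanDefect, jordanDefect, hu, hu', hu''] at hJ
  rw [hu, hu', hu'']
  obtain ⟨y, rfl⟩ : ∃ y, a = e * y * e := ⟨a, ha⟩
  obtain ⟨z, rfl⟩ : ∃ z, c = e * z * e := ⟨c, hc⟩
  -- `ψ (a c m)` cancels, and the `(e, f)`-corner of the rest is `-(ψ (a c) - ψ a c - a ψ c) m`
  exact eq_zero_of_eq_mul_mul hJ (-e) f (by noncomm_ring [hef.mul_rules, map_add, map_zero])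

theorem map_mul_ff_ff (h : IsPeirceNormalized ψ e f) (he2 : CornerTwoTorsionFree e)
    (hf2 : CornerTwoTorsionFree f)
    (hrf : ∀ b ∈ peirceSpace f f, (∀ x : R, e * x * f * b = 0) → b = 0) {b d : R}
    (hb : b ∈ peirceSpace f f) (hd : d ∈ peirceSpace f f) :
    ψ (b * d) = ψ b * d + b * ψ d := by
  have hef := h.pair
  have hbd : b * d ∈ peirceSpace f f := mul_mem_peirceSpace hef.idem_right hef.idem_right hb hd
  rw [← sub_eq_zero]
  refine hrf _ (sub_mem (h.symm.map_mem_diag he2 hbd) (add_mem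
    (mul_mem_peirceSpace hef.idem_right hef.idem_right (h.symm.map_mem_diag he2 hb) hd)
    (mul_mem_peirceSpace hef.idem_right hef.idem_right hb (h.symm.map_mem_diag he2 hd))))
    fun x => ?_
  have hm : e * x * f ∈ peirceSpace e f := mul_mul_mem_peirceSpace hef.idem_left hef.idem_right x
  have hJ : jordanDefect ψ (e * x * f) (b * d) - jordanDefect ψ (e * x * f * b) d
      - jordanDefect ψ (e * x * f) b * d = 0 := by
    rw [h.jordanDefect_ef_ff he2 hf2 hm hbd, h.jordanDefect_ef_ff he2 hf2 hm hb,
      h.jordanDefect_ef_ff he2 hf2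
        (mul_mem_peirceSpace hef.idem_left hef.idem_right hm hb) hd, zero_mul, sub_zero, sub_zero]
  obtain ⟨u, hu⟩ : ∃ u, ψ b = f * u * f := ⟨_, h.symm.map_mem_diag he2 hb⟩
  obtain ⟨u', hu'⟩ : ∃ u, ψ d = f * u * f := ⟨_, h.symm.map_mem_diag he2 hd⟩
  obtain ⟨u'', hu''⟩ : ∃ u, ψ (b * d) = f * u * f := ⟨_, h.symm.map_mem_diag he2 hbd⟩
  rw [jordanDefect, jordanDefect, jordanDefect, hu, hu', hu''] at hJ
  rw [hu, hu', hu'']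
  obtain ⟨y, rfl⟩ : ∃ y, b = f * y * f := ⟨b, hb⟩
  obtain ⟨z, rfl⟩ : ∃ z, d = f * z * f := ⟨d, hd⟩
  exact eq_zero_of_eq_mul_mul hJ (-e) f (by noncomm_ring [hef.mul_rules, map_add, map_zero])

theorem squareDefect_eq_zero (h : IsPeirceNormalized ψ e f) (he2 : CornerTwoTorsionFree e)
    (hf2 : CornerTwoTorsionFree f)
    (hlf : ∀ a ∈ peirceSpace e e, (∀ x : R, a * (e * x * f) = 0) → a = 0)
    (hrf : ∀ b ∈ peirceSpace f f, (∀ x : R, e * x * f * b = 0) → b = 0) (z : R) :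
    squareDefect ψ z = 0 := by
  have hef := h.pair
  have ha := mul_mul_mem_peirceSpace hef.idem_left hef.idem_left z
  have hm := mul_mul_mem_peirceSpace hef.idem_left hef.idem_right z
  have hn := mul_mul_mem_peirceSpace hef.idem_right hef.idem_left z
  have hb := mul_mul_mem_peirceSpace hef.idem_right hef.idem_right z
  have hsqa : squareDefect ψ (e * z * e) = 0 := by
    rw [squareDefect, h.map_mul_ee_ee he2 hf2 hlf ha ha, sub_self]
  have hsqb : squareDefect ψ (f * z * f) = 0 := by
    rw [squareDefect, h.map_mul_ff_ff he2 hf2 hrf hb hb, sub_self]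
  have han : jordanDefect ψ (e * z * e) (f * z * e) = 0 :=
    (jordanDefect_comm ψ _ _).trans (h.symm.jordanDefect_ef_ff hf2 he2 hn ha)
  have hab : jordanDefect ψ (e * z * e) (f * z * f) = 0 :=
    h.orthogonal.jordanDefect_eq_zero (by noncomm_ring [hef.mul_rules])
      (by noncomm_ring [hef.mul_rules])
  have hnb : jordanDefect ψ (f * z * e) (f * z * f) = 0 :=
    (jordanDefect_comm ψ _ _).trans (h.symm.jordanDefect_ee_ef hf2 he2 hb hn)
  rw [hef.eq_add_corners z]
  simp only [squareDefect_add, jordanDefect_add_left, hsqa, hsqb, han, hab, hnb,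
    h.squareDefect_offDiag he2 hf2 hm, h.symm.squareDefect_offDiag hf2 he2 hn,
    h.jordanDefect_ee_ef he2 hf2 ha hm, h.jordanDefect_ef_fe he2 hf2 hm hn,
    h.jordanDefect_ef_ff he2 hf2 hm hb, add_zero]

end IsPeirceNormalized

def innerDerivation (s : R) : R →+ R := AddMonoidHom.mulLeft s - AddMonoidHom.mulRight s

theorem innerDerivation_apply (s x : R) : innerDerivation s x = s * x - x * s := rfl

theorem IsJordanDerivationOnOrthogonal.sub_innerDerivation {φ : R →+ R}
    (hP : IsJordanDerivationOnOrthogonal φ) (s : R) :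
    IsJordanDerivationOnOrthogonal (φ - innerDerivation s) := by
  intro U V hUV hVU
  simp only [AddMonoidHom.sub_apply, innerDerivation_apply]
  calc _ = (φ U * V + V * φ U + U * φ V + φ V * U)
          - (s * (U * V + V * U) - (U * V + V * U) * s) := by noncomm_ring
    _ = 0 := by rw [hP U V hUV hVU, hUV, hVU]; noncomm_ring

theorem squareDefect_sub_innerDerivation (φ : R →+ R) (s x : R) :
    squareDefect (φ - innerDerivation s) x = squareDefect φ x := by
  simp only [squareDefect, AddMonoidHom.sub_apply, innerDerivation_apply]
  noncomm_ring

theorem isPeirceNormalized_sub_innerDerivation {φ : R →+ R} {e f : R} (hef : PeircePair e f)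
    (hP : IsJordanDerivationOnOrthogonal φ) (h1 : φ 1 = 0) (he2 : CornerTwoTorsionFree e)
    (hf2 : CornerTwoTorsionFree f) :
    IsPeirceNormalized (φ - innerDerivation (f * φ e * e - e * φ e * f)) e f where
  pair := hef
  orthogonal := hP.sub_innerDerivation _
  map_one := by simp only [AddMonoidHom.sub_apply, innerDerivation_apply, h1]; noncomm_ring
  map_left := by
    have hsq := hP.two_nsmul_squareDefect h1 hef.idem_left
    have hee : e * φ e * e = 0 := eq_zero_of_eq_mul_mul (he2.corner_eq_zero_of_two_nsmul hsq)
      (-1) 1 (by noncomm_ring [squareDefect, hef.mul_rules])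
    have hff : f * φ e * f = 0 := eq_zero_of_eq_mul_mul (hf2.corner_eq_zero_of_two_nsmul hsq)
      1 1 (by noncomm_ring [squareDefect, hef.mul_rules])
    rw [AddMonoidHom.sub_apply, innerDerivation_apply, sub_eq_zero]
    conv_lhs => rw [hef.eq_add_corners (φ e)]
    rw [hee, hff]
    noncomm_ring [hef.mul_rules]

end

theorem phi_is_jordan_derivation_if_unital_vanishing
    {R : Type*} [Ring R] (e : R) (he : e * e = e)
    (h2A : ∀ x : R, e * x * e + e * x * e = 0 → e * x * e = 0)
    (h2B : ∀ x : R, (1 - e) * x * (1 - e) + (1 - e) * x * (1 - e) = 0 →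
      (1 - e) * x * (1 - e) = 0)
    (hlf : ∀ a : R, a = e * a * e → (∀ x : R, a * (e * x * (1 - e)) = 0) → a = 0)
    (hrf : ∀ b : R, b = (1 - e) * b * (1 - e) → (∀ x : R, (e * x * (1 - e)) * b = 0) → b = 0)
    (φ : R →+ R)
    (hP : ∀ U V : R, U * V = 0 → V * U = 0 →
      φ U * V + V * φ U + U * φ V + φ V * U = 0)
    (h1 : φ 1 = 0) :
    ∀ U : R, φ (U * U) = φ U * U + U * φ U := by
  intro U
  have hψ := isPeirceNormalized_sub_innerDerivation (PeircePair.one_sub he) hP h1 h2A h2B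
  have hsq := hψ.squareDefect_eq_zero h2A h2B hlf hrf U
  rwa [squareDefect_sub_innerDerivation, squareDefect, sub_eq_zero] at hsq
end

section
/- (Corollary 2.8) Let A be a unital 2-torsion free ring and let n ≥ 2. If φ : Mₙ(A) → Mₙ(A) is an additive map satisfying condition (P), then there exist a derivation δ : Mₙ(A) → Mₙ(A) and a multiplier η : Mₙ(A) → Mₙ(A) such that φ = δ + η. If in addition φ(I) = 0, then φ is a derivation. -/
set_option linter.unusedSectionVars false
set_option maxHeartbeats 1000000

namespace MRD

variable {R : Type*} [Ring R]

private lemma mul3 {a b c : R} (h : a * b = c) (t : R) : a * (b * t) = c * t := by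
  rw [← mul_assoc, h]

private lemma corner {T : R} (h : T = 0) (c d : R) : c * (T * d) = 0 := by
  rw [h, zero_mul, mul_zero]


private lemma killA {w q p : R} (h1 : w * q = 0) (h2 : q * p = p) : w * p = 0 := by
  rw [← h2, ← mul_assoc, h1, zero_mul]

private lemma killB {p q w : R} (h1 : p * q = 0) (h2 : q * w = w) : p * w = 0 := by
  rw [← h2, ← mul_assoc, h1, zero_mul]

private lemma killC {w q p : R} (h1 : w * q = w) (h2 : q * p = 0) : w * p = 0 := by
  rw [← h1, mul_assoc, h2, mul_zero]

section One

variable (tor : ∀ t : R, t + t = 0 → t = 0)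
variable {e f : R} (he : e * e = e) (hf : f * f = f) (hef : e * f = 0) (hfe : f * e = 0)
  (hef1 : e + f = 1)
variable (g : R →+ R)
variable (hg : ∀ U V : R, U * V = 0 → V * U = 0 → g U * V + V * g U + U * g V + g V * U = 0)

include hef in
lemma memA_f {a : R} (h2 : a * e = a) : a * f = 0 := by
  rw [← h2, mul_assoc, hef, mul_zero]
include hfe in
lemma memA_f' {a : R} (h1 : e * a = a) : f * a = 0 := by
  rw [← h1, ← mul_assoc, hfe, zero_mul]
include hef1 in
lemma memX_f {x : R} (h2 : x * e = 0) : x * f = x := by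
  have : x * (e + f) = x := by rw [hef1, mul_one]
  rw [mul_add, h2, zero_add] at this; exact this
include hfe in
lemma memX_f' {x : R} (h1 : e * x = x) : f * x = 0 := by
  rw [← h1, ← mul_assoc, hfe, zero_mul]
lemma memX_sq {x : R} (h1 : e * x = x) (h2 : x * e = 0) : x * x = 0 := by
  conv_lhs => rw [← h1, mul_assoc, ← mul_assoc x e x, h2, zero_mul, mul_zero]
include hef1 in
lemma memZ_f {z : R} (h2 : e * z = 0) : f * z = z := by
  have : (e + f) * z = z := by rw [hef1, one_mul]
  rw [add_mul, h2, zero_add] at this; exact this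
include hef in
lemma memZ_f' {z : R} (h1 : z * e = z) : z * f = 0 := by
  rw [← h1, mul_assoc, hef, mul_zero]
include hef hef1 in
lemma memZ_sq {z : R} (h1 : z * e = z) (h2 : e * z = 0) : z * z = 0 := by
  have h3 := memZ_f' hef h1
  have h4 := memZ_f hef1 h2
  calc z * z = z * (f * z) := by rw [h4]
  _ = (z * f) * z := by rw [mul_assoc]
  _ = 0 := by rw [h3, zero_mul]

include tor he hf hef hfe hef1 hg

lemma GA22 {a : R} (h1 : e * a = a) (h2 : a * e = a) : f * (g a * f) = 0 := by
  have haf : a * f = 0 := memA_f hef h2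
  have hfa : f * a = 0 := memA_f' hfe h1
  have H := hg a f haf hfa
  have H2 := corner H f f
  simp only [add_mul, mul_add, mul_assoc, hf, mul3 hf, haf, mul3 haf, hfa, mul3 hfa,
    zero_mul, mul_zero, add_zero, zero_add] at H2
  exact tor _ H2

lemma GB11 {b : R} (h1 : e * b = 0) (h2 : b * e = 0) : e * (g b * e) = 0 := by
  have H := hg e b h1 h2
  have H2 := corner H e e
  simp only [add_mul, mul_add, mul_assoc, he, mul3 he, h1, mul3 h1, h2, mul3 h2,
    zero_mul, mul_zero, add_zero, zero_add] at H2
  exact tor _ H2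


lemma GA12 {a : R} (h1 : e * a = a) (h2 : a * e = a) :
    e * (g a * f) + a * (g f * f) = 0 := by
  have haf : a * f = 0 := memA_f hef h2
  have hfa : f * a = 0 := memA_f' hfe h1
  have H := hg a f haf hfa
  have H2 := corner H e f
  simp only [add_mul, mul_add, mul_assoc, he, mul3 he, hf, mul3 hf, hef, mul3 hef,
    hfe, mul3 hfe, h1, mul3 h1, h2, mul3 h2, haf, mul3 haf, hfa, mul3 hfa,
    zero_mul, mul_zero, add_zero, zero_add] at H2
  rw [← H2]; all_goals abel

lemma GA21 {a : R} (h1 : e * a = a) (h2 : a * e = a) :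
    f * (g a * e) + f * (g f * a) = 0 := by
  have haf : a * f = 0 := memA_f hef h2
  have hfa : f * a = 0 := memA_f' hfe h1
  have H := hg a f haf hfa
  have H2 := corner H f e
  simp only [add_mul, mul_add, mul_assoc, he, mul3 he, hf, mul3 hf, hef, mul3 hef,
    hfe, mul3 hfe, h1, mul3 h1, h2, mul3 h2, haf, mul3 haf, hfa, mul3 hfa,
    zero_mul, mul_zero, add_zero, zero_add] at H2
  rw [← H2]; all_goals abel

lemma GB12 {b : R} (h1 : e * b = 0) (h2 : b * e = 0) :
    e * (g b * f) + e * (g e * b) = 0 := by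
  have hbf : b * f = b := memX_f hef1 h2
  have H := hg e b h1 h2
  have H2 := corner H e f
  simp only [add_mul, mul_add, mul_assoc, he, mul3 he, hf, mul3 hf, hef, mul3 hef,
    hfe, mul3 hfe, h1, mul3 h1, h2, mul3 h2, hbf, mul3 hbf,
    zero_mul, mul_zero, add_zero, zero_add] at H2
  rw [← H2]; all_goals abel

lemma GB21 {b : R} (h1 : e * b = 0) (h2 : b * e = 0) :
    f * (g b * e) + b * (g e * e) = 0 := by
  have hfb : f * b = b := memZ_f hef1 h1
  have H := hg e b h1 h2
  have H2 := corner H f e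
  simp only [add_mul, mul_add, mul_assoc, he, mul3 he, hf, mul3 hf, hef, mul3 hef,
    hfe, mul3 hfe, h1, mul3 h1, h2, mul3 h2, hfb, mul3 hfb,
    zero_mul, mul_zero, add_zero, zero_add] at H2
  rw [← H2]; all_goals abel

lemma GC12 : e * (g e * f) + e * (g f * f) = 0 := by
  have H := hg e f hef hfe
  have H2 := corner H e f
  simp only [add_mul, mul_add, mul_assoc, he, mul3 he, hf, mul3 hf, hef, mul3 hef,
    hfe, mul3 hfe, zero_mul, mul_zero, add_zero, zero_add] at H2
  rw [← H2]; all_goals abel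

lemma GC21 : f * (g e * e) + f * (g f * e) = 0 := by
  have H := hg e f hef hfe
  have H2 := corner H f e
  simp only [add_mul, mul_add, mul_assoc, he, mul3 he, hf, mul3 hf, hef, mul3 hef,
    hfe, mul3 hfe, zero_mul, mul_zero, add_zero, zero_add] at H2
  rw [← H2]; all_goals abel


-- quadratic lemmas from G(x,x)=0 and G(z,z)=0
lemma GXsq {x : R} (h1 : e * x = x) (h2 : x * e = 0) :
    e * (g x * x) + x * (g x * f) = 0 := by
  have hx3 : x * f = x := memX_f hef1 h2
  have hxx : x * x = 0 := memX_sq h1 h2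
  have H := hg x x hxx hxx
  have H2 := corner H e f
  simp only [add_mul, mul_add, mul_assoc, he, mul3 he, hf, mul3 hf, hef, mul3 hef,
    hfe, mul3 hfe, h1, mul3 h1, h2, mul3 h2, hx3, mul3 hx3, hxx, mul3 hxx,
    zero_mul, mul_zero, add_zero, zero_add] at H2
  apply tor
  rw [← H2]; all_goals abel

lemma GZsq {z : R} (h1 : z * e = z) (h2 : e * z = 0) :
    f * (g z * z) + z * (g z * e) = 0 := by
  have hz3 : f * z = z := memZ_f hef1 h2
  have hzz : z * z = 0 := memZ_sq hef hef1 h1 h2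
  have H := hg z z hzz hzz
  have H2 := corner H f e
  simp only [add_mul, mul_add, mul_assoc, he, mul3 he, hf, mul3 hf, hef, mul3 hef,
    hfe, mul3 hfe, h1, mul3 h1, h2, mul3 h2, hz3, mul3 hz3, hzz, mul3 hzz,
    zero_mul, mul_zero, add_zero, zero_add] at H2
  apply tor
  rw [← H2]; all_goals abel

lemma GX11 {x : R} (h1 : e * x = x) (h2 : x * e = 0) :
    e * (g x * e) + x * (g x * e) + x * (g e * e) = 0 := by
  have hx3 : x * f = x := memX_f hef1 h2
  have hx4 : f * x = 0 := memX_f' hfe h1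
  have hxx : x * x = 0 := memX_sq h1 h2
  have hu : (e + x) * (f - x) = 0 := by
    simp only [add_mul, mul_sub, hef, h1, hx3, hxx, zero_sub, sub_zero]
    abel
  have hv : (f - x) * (e + x) = 0 := by
    simp only [sub_mul, mul_add, hfe, hx4, h2, hxx, add_zero, zero_add, sub_self]
  have H := hg (e + x) (f - x) hu hv
  rw [map_add, map_sub] at H
  -- bridges
  have br6 : e * (g f * e) = 0 := GB11 tor he hf hef hfe hef1 g hg hef hfe
  have hq := GC21 tor he hf hef hfe hef1 g hg
  have br1 : x * (g f * e) = -(x * (g e * e)) := by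
    calc x * (g f * e) = x * (f * (g f * e)) := (mul3 hx3 _).symm
    _ = x * (-(f * (g e * e))) := by rw [eq_neg_of_add_eq_zero_right hq]
    _ = -(x * (f * (g e * e))) := by rw [mul_neg]
    _ = -(x * (g e * e)) := by rw [mul3 hx3]
  have H2 := corner H e e
  simp only [add_mul, mul_add, mul_sub, sub_mul, mul_assoc, he, mul3 he, hf, mul3 hf,
    hef, mul3 hef, hfe, mul3 hfe, h1, mul3 h1, h2, mul3 h2, hx3, mul3 hx3, hx4, mul3 hx4,
    hxx, mul3 hxx, br6, br1, zero_mul, mul_zero, mul_neg, neg_mul, add_zero, zero_add, neg_zero,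
    sub_zero, zero_sub, neg_neg] at H2
  refine neg_eq_zero.mp (tor _ ?_)
  rw [← H2]; all_goals abel

lemma GX22 {x : R} (h1 : e * x = x) (h2 : x * e = 0) :
    f * (g x * f) = f * (g e * x) + f * (g x * x) := by
  have hx3 : x * f = x := memX_f hef1 h2
  have hx4 : f * x = 0 := memX_f' hfe h1
  have hxx : x * x = 0 := memX_sq h1 h2
  have hu : (e + x) * (f - x) = 0 := by
    simp only [add_mul, mul_sub, hef, h1, hx3, hxx, zero_sub, sub_zero]
    abel
  have hv : (f - x) * (e + x) = 0 := by
    simp only [sub_mul, mul_add, hfe, hx4, h2, hxx, add_zero, zero_add, sub_self]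
  have H := hg (e + x) (f - x) hu hv
  rw [map_add, map_sub] at H
  have br7 : f * (g e * f) = 0 := GA22 tor he hf hef hfe hef1 g hg he he
  have hq := GC21 tor he hf hef hfe hef1 g hg
  have hq2 : f * (g e * x) + f * (g f * x) = 0 := by
    have h6 := congrArg (· * x) hq
    simpa only [add_mul, zero_mul, mul_assoc, h1, mul3 h1] using h6
  have br4 : f * (g f * x) = -(f * (g e * x)) := eq_neg_of_add_eq_zero_right hq2
  have H2 := corner H f f
  simp only [add_mul, mul_add, mul_sub, sub_mul, mul_assoc, he, mul3 he, hf, mul3 hf,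
    hef, mul3 hef, hfe, mul3 hfe, h1, mul3 h1, h2, mul3 h2, hx3, mul3 hx3, hx4, mul3 hx4,
    hxx, mul3 hxx, br7, br4, zero_mul, mul_zero, mul_neg, neg_mul, add_zero, zero_add, neg_zero,
    sub_zero, zero_sub, neg_neg] at H2
  rw [← sub_eq_zero]
  apply tor
  rw [← H2]; all_goals abel

lemma GXc {x : R} (h1 : e * x = x) (h2 : x * e = 0) :
    x * (g f * f) = e * (g e * x) := by
  have hx3 : x * f = x := memX_f hef1 h2
  have hx4 : f * x = 0 := memX_f' hfe h1
  have hxx : x * x = 0 := memX_sq h1 h2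
  have hu : (e + x) * (f - x) = 0 := by
    simp only [add_mul, mul_sub, hef, h1, hx3, hxx, zero_sub, sub_zero]
    abel
  have hv : (f - x) * (e + x) = 0 := by
    simp only [sub_mul, mul_add, hfe, hx4, h2, hxx, add_zero, zero_add, sub_self]
  have H := hg (e + x) (f - x) hu hv
  rw [map_add, map_sub] at H
  have br6 : e * (g f * e) = 0 := GB11 tor he hf hef hfe hef1 g hg hef hfe
  have br7 : f * (g e * f) = 0 := GA22 tor he hf hef hfe hef1 g hg he he
  have brA : e * (g f * x) = 0 := by
    have h6 := congrArg (· * x) br6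
    simpa only [mul_assoc, h1, mul3 h1, zero_mul] using h6
  have brB : x * (g e * f) = 0 := by
    have h6 := congrArg (x * ·) br7
    simpa only [mul3 hx3, mul_zero] using h6
  have hqx := GXsq tor he hf hef hfe hef1 g hg h1 h2
  have brq : e * (g x * x) = -(x * (g x * f)) := eq_neg_of_add_eq_zero_left hqx
  have hc := GC12 tor he hf hef hfe hef1 g hg
  have brc : e * (g e * f) = -(e * (g f * f)) := eq_neg_of_add_eq_zero_left hc
  have H2 := corner H e f
  simp only [add_mul, mul_add, mul_sub, sub_mul, mul_assoc, he, mul3 he, hf, mul3 hf,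
    hef, mul3 hef, hfe, mul3 hfe, h1, mul3 h1, h2, mul3 h2, hx3, mul3 hx3, hx4, mul3 hx4,
    hxx, mul3 hxx, br6, brA, brB, brq, brc, zero_mul, mul_zero, mul_neg, neg_mul, add_zero, zero_add,
    neg_zero, sub_zero, zero_sub, neg_neg] at H2
  rw [← sub_eq_zero, ← H2]; all_goals abel


lemma GZ11 {z : R} (h1 : z * e = z) (h2 : e * z = 0) :
    e * (g z * e) + e * (g z * z) + e * (g e * z) = 0 := by
  have hz3 : f * z = z := memZ_f hef1 h2
  have hz4 : z * f = 0 := memZ_f' hef h1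
  have hzz : z * z = 0 := memZ_sq hef hef1 h1 h2
  have hu : (e + z) * (f - z) = 0 := by
    simp only [add_mul, mul_sub, hef, h2, hz4, hzz, sub_zero, zero_sub, add_zero, neg_zero]
  have hv : (f - z) * (e + z) = 0 := by
    simp only [sub_mul, mul_add, hfe, hz3, h1, hzz, zero_add, add_zero, zero_sub, sub_self]
    abel
  have H := hg (e + z) (f - z) hu hv
  rw [map_add, map_sub] at H
  have br6 : e * (g f * e) = 0 := GB11 tor he hf hef hfe hef1 g hg hef hfe
  have hc := GC12 tor he hf hef hfe hef1 g hg
  have hc2 : e * (g e * z) + e * (g f * z) = 0 := by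
    have h6 := congrArg (· * z) hc
    simpa only [add_mul, zero_mul, mul_assoc, hz3, mul3 hz3] using h6
  have brA : e * (g f * z) = -(e * (g e * z)) := eq_neg_of_add_eq_zero_right hc2
  have H2 := corner H e e
  simp only [add_mul, mul_add, mul_sub, sub_mul, mul_assoc, he, mul3 he, hf, mul3 hf,
    hef, mul3 hef, hfe, mul3 hfe, h1, mul3 h1, h2, mul3 h2, hz3, mul3 hz3, hz4, mul3 hz4,
    hzz, mul3 hzz, br6, brA, zero_mul, mul_zero, mul_neg, neg_mul, add_zero, zero_add,
    neg_zero, sub_zero, zero_sub, neg_neg] at H2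
  refine neg_eq_zero.mp (tor _ ?_)
  rw [← H2]; all_goals abel

lemma GZ22 {z : R} (h1 : z * e = z) (h2 : e * z = 0) :
    f * (g z * f) = z * (g e * f) + z * (g z * f) := by
  have hz3 : f * z = z := memZ_f hef1 h2
  have hz4 : z * f = 0 := memZ_f' hef h1
  have hzz : z * z = 0 := memZ_sq hef hef1 h1 h2
  have hu : (e + z) * (f - z) = 0 := by
    simp only [add_mul, mul_sub, hef, h2, hz4, hzz, sub_zero, zero_sub, add_zero, neg_zero]
  have hv : (f - z) * (e + z) = 0 := by
    simp only [sub_mul, mul_add, hfe, hz3, h1, hzz, zero_add, add_zero, zero_sub, sub_self]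
    abel
  have H := hg (e + z) (f - z) hu hv
  rw [map_add, map_sub] at H
  have br7 : f * (g e * f) = 0 := GA22 tor he hf hef hfe hef1 g hg he he
  have hc := GC12 tor he hf hef hfe hef1 g hg
  have hc2 : z * (g e * f) + z * (g f * f) = 0 := by
    have h6 := congrArg (z * ·) hc
    simpa only [mul_add, mul_zero, mul3 h1] using h6
  have brA : z * (g f * f) = -(z * (g e * f)) := eq_neg_of_add_eq_zero_right hc2
  have H2 := corner H f f
  simp only [add_mul, mul_add, mul_sub, sub_mul, mul_assoc, he, mul3 he, hf, mul3 hf,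
    hef, mul3 hef, hfe, mul3 hfe, h1, mul3 h1, h2, mul3 h2, hz3, mul3 hz3, hz4, mul3 hz4,
    hzz, mul3 hzz, br7, brA, zero_mul, mul_zero, mul_neg, neg_mul, add_zero, zero_add,
    neg_zero, sub_zero, zero_sub, neg_neg] at H2
  rw [← sub_eq_zero]
  apply tor
  rw [← H2]; all_goals abel

lemma GZc {z : R} (h1 : z * e = z) (h2 : e * z = 0) :
    f * (g f * z) = z * (g e * e) := by
  have hz3 : f * z = z := memZ_f hef1 h2
  have hz4 : z * f = 0 := memZ_f' hef h1
  have hzz : z * z = 0 := memZ_sq hef hef1 h1 h2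
  have hu : (e + z) * (f - z) = 0 := by
    simp only [add_mul, mul_sub, hef, h2, hz4, hzz, sub_zero, zero_sub, add_zero, neg_zero]
  have hv : (f - z) * (e + z) = 0 := by
    simp only [sub_mul, mul_add, hfe, hz3, h1, hzz, zero_add, add_zero, zero_sub, sub_self]
    abel
  have H := hg (e + z) (f - z) hu hv
  rw [map_add, map_sub] at H
  have br6 : e * (g f * e) = 0 := GB11 tor he hf hef hfe hef1 g hg hef hfe
  have br7 : f * (g e * f) = 0 := GA22 tor he hf hef hfe hef1 g hg he he
  have brA : f * (g e * z) = 0 := by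
    have h6 := congrArg (· * z) br7
    simpa only [mul_assoc, hz3, mul3 hz3, zero_mul] using h6
  have brB : z * (g f * e) = 0 := by
    have h6 := congrArg (z * ·) br6
    simpa only [mul3 h1, mul_zero] using h6
  have hqz := GZsq tor he hf hef hfe hef1 g hg h1 h2
  have brq : f * (g z * z) = -(z * (g z * e)) := eq_neg_of_add_eq_zero_left hqz
  have hq := GC21 tor he hf hef hfe hef1 g hg
  have brc : f * (g e * e) = -(f * (g f * e)) := eq_neg_of_add_eq_zero_left hq
  have H2 := corner H f e
  simp only [add_mul, mul_add, mul_sub, sub_mul, mul_assoc, he, mul3 he, hf, mul3 hf,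
    hef, mul3 hef, hfe, mul3 hfe, h1, mul3 h1, h2, mul3 h2, hz3, mul3 hz3, hz4, mul3 hz4,
    hzz, mul3 hzz, brA, brB, brq, brc, zero_mul, mul_zero, mul_neg, neg_mul, add_zero,
    zero_add, neg_zero, sub_zero, zero_sub, neg_neg] at H2
  rw [← sub_eq_zero, ← H2]; all_goals abel

lemma B11 {x y : R} (hx1 : e * x = x) (hx2 : x * e = 0) (hy1 : e * y = y) (hy2 : y * e = 0) :
    y * (g x * e) + x * (g y * e) = 0 := by
  have hxy : x * y = 0 := by rw [← hy1, ← mul_assoc, hx2, zero_mul]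
  have hyx : y * x = 0 := by rw [← hx1, ← mul_assoc, hy2, zero_mul]
  have H := hg x y hxy hyx
  have H2 := corner H e e
  simp only [add_mul, mul_add, mul_assoc, he, mul3 he, hx1, mul3 hx1, hx2, mul3 hx2,
    hy1, mul3 hy1, hy2, mul3 hy2, zero_mul, mul_zero, add_zero, zero_add] at H2
  rw [← H2]; all_goals abel

lemma B11' {z w : R} (hz1 : z * e = z) (hz2 : e * z = 0) (hw1 : w * e = w) (hw2 : e * w = 0) :
    e * (g z * w) + e * (g w * z) = 0 := by
  have hzw : z * w = 0 := by rw [← hz1, mul_assoc, hw2, mul_zero]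
  have hwz : w * z = 0 := by rw [← hw1, mul_assoc, hz2, mul_zero]
  have H := hg z w hzw hwz
  have H2 := corner H e e
  simp only [add_mul, mul_add, mul_assoc, he, mul3 he, hz1, mul3 hz1, hz2, mul3 hz2,
    hw1, mul3 hw1, hw2, mul3 hw2, zero_mul, mul_zero, add_zero, zero_add] at H2
  rw [← H2]; all_goals abel

lemma star {x b : R} (hx1 : e * x = x) (hx2 : x * e = 0) (hb1 : e * b = 0) (hb2 : b * e = 0) :
    f * (g (x * b) * e) = b * (g x * e) := by
  have hx3 : x * f = x := memX_f hef1 hx2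
  have hx4 : f * x = 0 := memX_f' hfe hx1
  have hxx : x * x = 0 := memX_sq hx1 hx2
  have hb3 : f * b = b := memZ_f hef1 hb1
  have hb4 : b * f = b := memX_f hef1 hb2
  have hbx : b * x = 0 := killB hb2 hx1
  have hu : (e + x) * (b - x * b) = 0 := by
    simp only [add_mul, mul_sub, hb1, mul3 hx1, mul3 hxx, zero_mul, zero_sub, sub_zero]
    abel
  have hv : (b - x * b) * (e + x) = 0 := by
    simp only [sub_mul, mul_add, mul_assoc, hb2, hbx, mul3 hbx, mul_zero, add_zero,
      zero_add, sub_self]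
  have H := hg (e + x) (b - x * b) hu hv
  rw [map_add, map_sub] at H
  have hB := GB21 tor he hf hef hfe hef1 g hg hb1 hb2
  have brB : f * (g b * e) = -(b * (g e * e)) := eq_neg_of_add_eq_zero_left hB
  have H2 := corner H f e
  simp only [add_mul, mul_add, mul_sub, sub_mul, mul_assoc, he, mul3 he, hf, mul3 hf,
    hef, mul3 hef, hfe, mul3 hfe, hx1, mul3 hx1, hx2, mul3 hx2, hx3, mul3 hx3,
    hx4, mul3 hx4, hb1, mul3 hb1, hb2, mul3 hb2, hb3, mul3 hb3, hb4, mul3 hb4,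
    hbx, mul3 hbx, hxx, mul3 hxx, brB, zero_mul, mul_zero, mul_neg, neg_mul,
    add_zero, zero_add, neg_zero, sub_zero, zero_sub, neg_neg] at H2
  rw [← sub_eq_zero, ← neg_eq_zero, ← H2]; all_goals abel

lemma star' {z b : R} (hz1 : z * e = z) (hz2 : e * z = 0) (hb1 : e * b = 0) (hb2 : b * e = 0) :
    e * (g (b * z) * f) = e * (g z * b) := by
  have hz3 : f * z = z := memZ_f hef1 hz2
  have hz4 : z * f = 0 := memZ_f' hef hz1
  have hzz : z * z = 0 := memZ_sq hef hef1 hz1 hz2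
  have hb3 : f * b = b := memZ_f hef1 hb1
  have hb4 : b * f = b := memX_f hef1 hb2
  have hzb : z * b = 0 := killA hz4 hb3
  have hu : (e + z) * (b - b * z) = 0 := by
    simp only [add_mul, mul_sub, hb1, mul3 hb1, hzb, mul3 hzb, zero_mul, zero_sub,
      sub_zero, sub_self, add_zero, neg_zero]
  have hv : (b - b * z) * (e + z) = 0 := by
    simp only [sub_mul, mul_add, mul_assoc, hb2, hz1, hzz, mul_zero, add_zero,
      zero_add, zero_mul, sub_self]
    abel
  have H := hg (e + z) (b - b * z) hu hv
  rw [map_add, map_sub] at H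
  have hB := GB12 tor he hf hef hfe hef1 g hg hb1 hb2
  have brB : e * (g b * f) = -(e * (g e * b)) := eq_neg_of_add_eq_zero_left hB
  have H2 := corner H e f
  simp only [add_mul, mul_add, mul_sub, sub_mul, mul_assoc, he, mul3 he, hf, mul3 hf,
    hef, mul3 hef, hfe, mul3 hfe, hz1, mul3 hz1, hz2, mul3 hz2, hz3, mul3 hz3,
    hz4, mul3 hz4, hb1, mul3 hb1, hb2, mul3 hb2, hb3, mul3 hb3, hb4, mul3 hb4,
    hzb, mul3 hzb, hzz, mul3 hzz, brB, zero_mul, mul_zero, mul_neg, neg_mul,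
    add_zero, zero_add, neg_zero, sub_zero, zero_sub, neg_neg] at H2
  rw [← sub_eq_zero, ← neg_eq_zero, ← H2]; all_goals abel


include hef1 in
lemma peirce (T : R) : (e * (T * e) + e * (T * f)) + (f * (T * e) + f * (T * f)) = T := by
  have h : (e + f) * (T * (e + f)) = T := by rw [hef1, one_mul, mul_one]
  calc (e * (T * e) + e * (T * f)) + (f * (T * e) + f * (T * f))
      = (e + f) * (T * (e + f)) := by simp only [add_mul, mul_add]; abel
  _ = T := h

section Two

variable (hge : g e = 0) (hgf : g f = 0) (hg1 : g 1 = 0)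
variable (hS2 : ∀ x : R, e * x = x → x * e = 0 → f * (g x * e) = 0)
variable (hS2' : ∀ z : R, z * e = z → e * z = 0 → e * (g z * f) = 0)

include tor he hf hef hfe hef1 hg hge hgf

lemma CPa {a : R} (h1 : e * a = a) (h2 : a * e = a) :
    e * g a = g a ∧ g a * e = g a ∧ f * g a = 0 ∧ g a * f = 0 := by
  have h22 := GA22 tor he hf hef hfe hef1 g hg h1 h2
  have h12 := GA12 tor he hf hef hfe hef1 g hg h1 h2
  have h21 := GA21 tor he hf hef hfe hef1 g hg h1 h2
  rw [hgf] at h12 h21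
  simp only [zero_mul, mul_zero, add_zero] at h12 h21
  have hd := peirce tor he hf hef hfe hef1 g hg (g a)
  rw [h22, h12, h21] at hd
  simp only [add_zero, zero_add] at hd
  refine ⟨?_, ?_, ?_, ?_⟩
  · rw [← hd, mul3 he]
  · rw [← hd, mul_assoc, mul_assoc, he]
  · rw [← hd, mul3 hfe, zero_mul]
  · rw [← hd, mul_assoc, mul_assoc, hef, mul_zero, mul_zero]

lemma CPb {b : R} (h1 : e * b = 0) (h2 : b * e = 0) :
    e * g b = 0 ∧ g b * e = 0 ∧ f * g b = g b ∧ g b * f = g b := by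
  have h11 := GB11 tor he hf hef hfe hef1 g hg h1 h2
  have h12 := GB12 tor he hf hef hfe hef1 g hg h1 h2
  have h21 := GB21 tor he hf hef hfe hef1 g hg h1 h2
  rw [hge] at h12 h21
  simp only [zero_mul, mul_zero, add_zero] at h12 h21
  have hd := peirce tor he hf hef hfe hef1 g hg (g b)
  rw [h11, h12, h21] at hd
  simp only [add_zero, zero_add] at hd
  refine ⟨?_, ?_, ?_, ?_⟩
  · rw [← hd, mul3 hef, zero_mul]
  · rw [← hd, mul_assoc, mul_assoc, hfe, mul_zero, mul_zero]
  · rw [← hd, mul3 hf]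
  · rw [← hd, mul_assoc, mul_assoc, hf]

include hS2 in
lemma CPx {x : R} (h1 : e * x = x) (h2 : x * e = 0) :
    e * g x = g x ∧ g x * e = 0 ∧ f * g x = 0 ∧ g x * f = g x := by
  have hx3 : x * f = x := memX_f hef1 h2
  have hs := hS2 x h1 h2
  have h11 := GX11 tor he hf hef hfe hef1 g hg h1 h2
  have h22 := GX22 tor he hf hef hfe hef1 g hg h1 h2
  rw [hge] at h11 h22
  have hxgx : x * (g x * e) = 0 := by
    calc x * (g x * e) = x * (f * (g x * e)) := (mul3 hx3 _).symm
    _ = 0 := by rw [hs, mul_zero]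
  have hgxx : f * (g x * x) = 0 := by
    have h6 := congrArg (· * x) hs
    simpa only [mul_assoc, h1, mul3 h1, zero_mul] using h6
  simp only [zero_mul, mul_zero, add_zero, hxgx, hgxx, zero_add] at h11 h22
  have hd := peirce tor he hf hef hfe hef1 g hg (g x)
  rw [h11, h22, hs] at hd
  simp only [add_zero, zero_add] at hd
  refine ⟨?_, ?_, ?_, ?_⟩
  · rw [← hd, mul3 he]
  · rw [← hd, mul_assoc, mul_assoc, hfe, mul_zero, mul_zero]
  · rw [← hd, mul3 hfe, zero_mul]
  · rw [← hd, mul_assoc, mul_assoc, hf]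

include hS2' in
lemma CPz {z : R} (h1 : z * e = z) (h2 : e * z = 0) :
    e * g z = 0 ∧ g z * e = g z ∧ f * g z = g z ∧ g z * f = 0 := by
  have hz3 : f * z = z := memZ_f hef1 h2
  have hs := hS2' z h1 h2
  have h11 := GZ11 tor he hf hef hfe hef1 g hg h1 h2
  have h22 := GZ22 tor he hf hef hfe hef1 g hg h1 h2
  rw [hge] at h11 h22
  have hgzz : e * (g z * z) = 0 := by
    have h6 := congrArg (· * z) hs
    simpa only [mul_assoc, hz3, mul3 hz3, zero_mul] using h6
  have hzgz : z * (g z * f) = 0 := by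
    calc z * (g z * f) = z * (e * (g z * f)) := (mul3 h1 _).symm
    _ = 0 := by rw [hs, mul_zero]
  simp only [zero_mul, mul_zero, add_zero, hgzz, hzgz, zero_add] at h11 h22
  have hd := peirce tor he hf hef hfe hef1 g hg (g z)
  rw [h11, h22, hs] at hd
  simp only [add_zero, zero_add] at hd
  refine ⟨?_, ?_, ?_, ?_⟩
  · rw [← hd, mul3 hef, zero_mul]
  · rw [← hd, mul_assoc, mul_assoc, he]
  · rw [← hd, mul3 hf]
  · rw [← hd, mul_assoc, mul_assoc, hef, mul_zero, mul_zero]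


include hS2 in
lemma PR1 {a x : R} (h1 : e * a = a) (h2 : a * e = a) (hx1 : e * x = x) (hx2 : x * e = 0) :
    g (a * x) = g a * x + a * g x := by
  have hx3 : x * f = x := memX_f hef1 hx2
  have hxx : x * x = 0 := memX_sq hx1 hx2
  have haf : a * f = 0 := memA_f hef h2
  have hfa : f * a = 0 := memA_f' hfe h1
  have hxa : x * a = 0 := killB hx2 h1
  have hax1 : e * (a * x) = a * x := by rw [← mul_assoc, h1]
  have hax2 : (a * x) * e = 0 := by rw [mul_assoc, hx2, mul_zero]
  obtain ⟨ca1, ca2, ca3, ca4⟩ := CPa tor he hf hef hfe hef1 g hg hge hgf h1 h2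
  obtain ⟨cx1, cx2, cx3, cx4⟩ := CPx tor he hf hef hfe hef1 g hg hge hgf hS2 hx1 hx2
  obtain ⟨cax1, cax2, cax3, cax4⟩ := CPx tor he hf hef hfe hef1 g hg hge hgf hS2 hax1 hax2
  have hu : (a + a * x) * (f - x) = 0 := by
    simp only [add_mul, mul_sub, haf, mul_assoc, hx3, hxx, mul_zero, zero_sub, sub_zero]
    abel
  have hv : (f - x) * (a + a * x) = 0 := by
    simp only [sub_mul, mul_add, hfa, mul3 hfa, hxa, mul3 hxa, zero_mul, zero_add,
      sub_self]
  have H := hg (a + a * x) (f - x) hu hv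
  rw [map_add, map_sub, hgf, zero_sub] at H
  have br1 : g (a * x) * x = 0 := killA cax2 hx1
  have br2 : x * g a = 0 := killB hx2 ca1
  have br3 : x * g (a * x) = 0 := killB hx2 cax1
  have br4 : x * g x = 0 := killB hx2 cx1
  have br5 : g x * a = 0 := killA cx2 h1
  simp only [add_mul, mul_add, mul_sub, sub_mul, mul_assoc, mul_neg, neg_mul,
    ca3, ca4, cax3, cax4, br1, br2, br3, br4, mul3 br4, br5, mul3 br5,
    zero_mul, mul_zero, add_zero, zero_add, neg_zero, sub_zero, zero_sub, neg_neg] at H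
  rw [← sub_eq_zero, ← H]; all_goals abel

include hS2 in
lemma PR2 {x b : R} (hx1 : e * x = x) (hx2 : x * e = 0) (hb1 : e * b = 0) (hb2 : b * e = 0) :
    g (x * b) = g x * b + x * g b := by
  have hx3 : x * f = x := memX_f hef1 hx2
  have hx4 : f * x = 0 := memX_f' hfe hx1
  have hxx : x * x = 0 := memX_sq hx1 hx2
  have hbx : b * x = 0 := killB hb2 hx1
  have hxb1 : e * (x * b) = x * b := by rw [← mul_assoc, hx1]
  have hxb2 : (x * b) * e = 0 := by rw [mul_assoc, hb2, mul_zero]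
  obtain ⟨cx1, cx2, cx3, cx4⟩ := CPx tor he hf hef hfe hef1 g hg hge hgf hS2 hx1 hx2
  obtain ⟨cb1, cb2, cb3, cb4⟩ := CPb tor he hf hef hfe hef1 g hg hge hgf hb1 hb2
  obtain ⟨cxb1, cxb2, cxb3, cxb4⟩ := CPx tor he hf hef hfe hef1 g hg hge hgf hS2 hxb1 hxb2
  have hu : (e + x) * (b - x * b) = 0 := by
    simp only [add_mul, mul_sub, hb1, mul3 hx1, mul3 hxx, zero_mul, zero_sub, sub_zero]
    abel
  have hv : (b - x * b) * (e + x) = 0 := by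
    simp only [sub_mul, mul_add, mul_assoc, hb2, hbx, mul3 hbx, mul_zero, add_zero,
      zero_add, sub_self]
  have H := hg (e + x) (b - x * b) hu hv
  rw [map_add, map_sub, hge, zero_add] at H
  have br1 : g x * x = 0 := killA cx2 hx1
  have br2 : b * g x = 0 := killB hb2 cx1
  have br3 : x * g (x * b) = 0 := killB hx2 cxb1
  have br4 : g b * x = 0 := killA cb2 hx1
  have br5 : g (x * b) * x = 0 := killA cxb2 hx1
  simp only [add_mul, mul_add, mul_sub, sub_mul, mul_assoc, mul_neg, neg_mul,
    cb1, cb2, cx1, cxb1, cxb2, br1, mul3 br1, br2, mul3 br2, br3, br4, br5,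
    zero_mul, mul_zero, add_zero, zero_add, neg_zero, sub_zero, zero_sub, neg_neg] at H
  rw [← sub_eq_zero, ← neg_eq_zero, ← H]; all_goals abel

include hS2' in
lemma PR3 {z a : R} (hz1 : z * e = z) (hz2 : e * z = 0) (h1 : e * a = a) (h2 : a * e = a) :
    g (z * a) = g z * a + z * g a := by
  have hz3 : f * z = z := memZ_f hef1 hz2
  have hz4 : z * f = 0 := memZ_f' hef hz1
  have hzz : z * z = 0 := memZ_sq hef hef1 hz1 hz2
  have haf : a * f = 0 := memA_f hef h2
  have hfa : f * a = 0 := memA_f' hfe h1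
  have haz : a * z = 0 := killC h2 hz2
  have hza1 : (z * a) * e = z * a := by rw [mul_assoc, h2]
  have hza2 : e * (z * a) = 0 := by rw [← mul_assoc, hz2, zero_mul]
  obtain ⟨ca1, ca2, ca3, ca4⟩ := CPa tor he hf hef hfe hef1 g hg hge hgf h1 h2
  obtain ⟨cz1, cz2, cz3, cz4⟩ := CPz tor he hf hef hfe hef1 g hg hge hgf hS2' hz1 hz2
  obtain ⟨cza1, cza2, cza3, cza4⟩ := CPz tor he hf hef hfe hef1 g hg hge hgf hS2' hza1 hza2
  have hu : (f + z) * (a - z * a) = 0 := by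
    simp only [add_mul, mul_sub, hfa, mul3 hz3, mul3 hzz, zero_mul, zero_sub, sub_zero]
    abel
  have hv : (a - z * a) * (f + z) = 0 := by
    simp only [sub_mul, mul_add, mul_assoc, haf, haz, mul_zero, add_zero,
      zero_add, sub_self]
  have H := hg (f + z) (a - z * a) hu hv
  rw [map_add, map_sub, hgf, zero_add] at H
  have br1 : g z * z = 0 := killA cz4 hz3
  have br2 : a * g z = 0 := killC h2 cz1
  have br3 : z * g (z * a) = 0 := killC hz1 cza1
  have br4 : g a * z = 0 := killC ca2 hz2
  have br5 : g (z * a) * z = 0 := killA cza4 hz3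
  simp only [add_mul, mul_add, mul_sub, sub_mul, mul_assoc, mul_neg, neg_mul,
    ca3, ca4, cza3, cza4, br1, mul3 br1, br2, mul3 br2, br3, br4, br5,
    zero_mul, mul_zero, add_zero, zero_add, neg_zero, sub_zero, zero_sub, neg_neg] at H
  rw [← sub_eq_zero, ← neg_eq_zero, ← H]; all_goals abel

include hS2' in
lemma PR4 {b z : R} (hb1 : e * b = 0) (hb2 : b * e = 0) (hz1 : z * e = z) (hz2 : e * z = 0) :
    g (b * z) = g b * z + b * g z := by
  have hz3 : f * z = z := memZ_f hef1 hz2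
  have hz4 : z * f = 0 := memZ_f' hef hz1
  have hzz : z * z = 0 := memZ_sq hef hef1 hz1 hz2
  have hb3 : f * b = b := memZ_f hef1 hb1
  have hb4 : b * f = b := memX_f hef1 hb2
  have hzb : z * b = 0 := killA hz4 hb3
  have hbz1 : (b * z) * e = b * z := by rw [mul_assoc, hz1]
  have hbz2 : e * (b * z) = 0 := by rw [← mul_assoc, hb1, zero_mul]
  obtain ⟨cb1, cb2, cb3, cb4⟩ := CPb tor he hf hef hfe hef1 g hg hge hgf hb1 hb2
  obtain ⟨cz1, cz2, cz3, cz4⟩ := CPz tor he hf hef hfe hef1 g hg hge hgf hS2' hz1 hz2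
  obtain ⟨cbz1, cbz2, cbz3, cbz4⟩ := CPz tor he hf hef hfe hef1 g hg hge hgf hS2' hbz1 hbz2
  have hu : (e + z) * (b - b * z) = 0 := by
    simp only [add_mul, mul_sub, hb1, mul3 hb1, hzb, mul3 hzb, zero_mul, zero_sub,
      sub_zero, sub_self, add_zero, neg_zero]
  have hv : (b - b * z) * (e + z) = 0 := by
    simp only [sub_mul, mul_add, mul_assoc, hb2, hz1, hzz, mul_zero, add_zero,
      zero_add, zero_mul, sub_self]
    abel
  have H := hg (e + z) (b - b * z) hu hv
  rw [map_add, map_sub, hge, zero_add] at H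
  have br1 : g z * b = 0 := killA cz4 hb3
  have br2 : z * g z = 0 := killC hz1 cz1
  have br3 : z * g b = 0 := killA hz4 cb3
  have br4 : z * g (b * z) = 0 := killA hz4 cbz3
  have br6 : g (b * z) * z = 0 := killA cbz4 hz3
  simp only [add_mul, mul_add, mul_sub, sub_mul, mul_assoc, mul_neg, neg_mul,
    cb1, cb2, cbz1, cbz2, br1, mul3 br1, br2, mul3 br2, br3, br4, br6,
    zero_mul, mul_zero, add_zero, zero_add, neg_zero, sub_zero, zero_sub, neg_neg] at H
  rw [← sub_eq_zero, ← neg_eq_zero, ← H]; all_goals abel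


include hg1 in
lemma PRjordan {u : R} (hid : u * u = u) : g u = g u * u + u * g u := by
  have h1 : u * (1 - u) = 0 := by rw [mul_sub, mul_one, hid, sub_self]
  have h2 : (1 - u) * u = 0 := by rw [sub_mul, one_mul, hid, sub_self]
  have H := hg u (1 - u) h1 h2
  rw [map_sub, hg1, zero_sub] at H
  simp only [mul_sub, sub_mul, mul_one, one_mul, mul_neg, neg_mul] at H
  rw [← sub_eq_zero]; apply tor; rw [← H]; all_goals abel

include hS2 hS2' hg1 in
lemma PR7aux {x z : R} (hx1 : e * x = x) (hx2 : x * e = 0) (hz1 : z * e = z) (hz2 : e * z = 0) :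
    g (x * z) - g x * z - x * g z = (g (x * z) - g x * z - x * g z) * (x * z) := by
  have hxx := memX_sq hx1 hx2
  have hzz := memZ_sq hef hef1 hz1 hz2
  have hP1 : e * (x * z) = x * z := by rw [← mul_assoc, hx1]
  have hP2 : (x * z) * e = x * z := by rw [mul_assoc, hz1]
  have hQ1 : e * (z * x) = 0 := by rw [← mul_assoc, hz2, zero_mul]
  have hQ2 : (z * x) * e = 0 := by rw [mul_assoc, hx2, mul_zero]
  obtain ⟨cx1, cx2, cx3, cx4⟩ := CPx tor he hf hef hfe hef1 g hg hge hgf hS2 hx1 hx2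
  obtain ⟨cz1, cz2, cz3, cz4⟩ := CPz tor he hf hef hfe hef1 g hg hge hgf hS2' hz1 hz2
  obtain ⟨cP1, cP2, cP3, cP4⟩ := CPa tor he hf hef hfe hef1 g hg hge hgf hP1 hP2
  obtain ⟨cQ1, cQ2, cQ3, cQ4⟩ := CPb tor he hf hef hfe hef1 g hg hge hgf hQ1 hQ2
  have h5 : (e + x) * (1 - z) = e + x - x * z := by
    rw [mul_sub, mul_one, add_mul, hz2, zero_add]
  have hfac : (1 + z) * ((e + x) * (1 - z)) = e + x + z + z * x - x * z - z * (x * z) := by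
    rw [h5, add_mul, one_mul, mul_sub, mul_add, hz1]
    abel
  have hzu : (1 - z) * (1 + z) = 1 := by
    have hh : (1 - z) * (1 + z) = 1 + z - z - z * z := by noncomm_ring
    rw [hh, hzz]
    abel
  have hee : (e + x) * (e + x) = e + x := by
    have hh : (e + x) * (e + x) = e * e + e * x + x * e + x * x := by noncomm_ring
    rw [hh, he, hx1, hx2, hxx, add_zero, add_zero]
  have hid : (e + x + z + z * x - x * z - z * (x * z)) * (e + x + z + z * x - x * z - z * (x * z))
      = e + x + z + z * x - x * z - z * (x * z) := by
    rw [← hfac]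
    calc ((1 + z) * ((e + x) * (1 - z))) * ((1 + z) * ((e + x) * (1 - z)))
        = (1 + z) * ((e + x) * (((1 - z) * ((1 + z) * ((e + x) * (1 - z)))))) := by
          simp only [mul_assoc]
      _ = (1 + z) * ((e + x) * ((e + x) * (1 - z))) := by
          rw [← mul_assoc (1 - z), hzu, one_mul]
      _ = (1 + z) * (((e + x) * (e + x)) * (1 - z)) := by rw [mul_assoc]
      _ = (1 + z) * ((e + x) * (1 - z)) := by rw [hee]
  have hJ := PRjordan tor he hf hef hfe hef1 g hg hge hgf hg1 hid
  have hgu : g (e + x + z + z * x - x * z - z * (x * z))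
      = g x + g z + g (z * x) - g (x * z) - (g z * (x * z) + z * g (x * z)) := by
    rw [map_sub, map_sub, map_add, map_add, map_add, hge, zero_add,
      PR3 tor he hf hef hfe hef1 g hg hge hgf hS2' hz1 hz2 hP1 hP2]
  rw [hgu] at hJ
  have H0 := sub_eq_zero.mpr hJ
  have H2 := corner H0 e e
  have brA : g x * x = 0 := killA cx2 hx1
  have brB : x * g x = 0 := killB hx2 cx1
  have brC : g z * z = 0 := killC cz2 hz2
  have brD : z * g z = 0 := killC hz1 cz1
  have brE : x * g (x * z) = 0 := killB hx2 cP1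
  have brF : g (x * z) * z = 0 := killC cP2 hz2
  have brG : g (z * x) * x = 0 := killA cQ2 hx1
  have brH : z * g (z * x) = 0 := killC hz1 cQ1
  simp only [add_mul, mul_add, mul_sub, sub_mul, mul_assoc, mul_neg, neg_mul,
    he, mul3 he, hx1, mul3 hx1, hx2, mul3 hx2, hz1, mul3 hz1, hz2, mul3 hz2,
    hxx, mul3 hxx, hzz, mul3 hzz, cx1, mul3 cx1, cx2, mul3 cx2, cz1, mul3 cz1,
    cz2, mul3 cz2, cP1, mul3 cP1, cP2, mul3 cP2, cQ1, mul3 cQ1, cQ2, mul3 cQ2,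
    brA, mul3 brA, brB, mul3 brB, brC, mul3 brC, brD, mul3 brD, brE, mul3 brE,
    brF, mul3 brF, brG, mul3 brG, brH, mul3 brH,
    zero_mul, mul_zero, add_zero, zero_add, neg_zero, sub_zero, zero_sub, neg_neg] at H2
  rw [← sub_eq_zero]
  simp only [sub_mul, mul_assoc]
  rw [← H2]
  all_goals abel

include hS2 hS2' hg1 in
lemma PR7 {x z : R} (hx1 : e * x = x) (hx2 : x * e = 0) (hz1 : z * e = z) (hz2 : e * z = 0) :
    g (x * z) = g x * z + x * g z := by
  have h1 := PR7aux tor he hf hef hfe hef1 g hg hge hgf hg1 hS2 hS2' hx1 hx2 hz1 hz2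
  have hz1n : (-z) * e = -z := by rw [neg_mul, hz1]
  have hz2n : e * (-z) = 0 := by rw [mul_neg, hz2, neg_zero]
  have h2 := PR7aux tor he hf hef hfe hef1 g hg hge hgf hg1 hS2 hS2' hx1 hx2 hz1n hz2n
  have h1z := sub_eq_zero.mpr h1
  have h2z := sub_eq_zero.mpr h2
  have key : (g (x * z) - g x * z - x * g z) + (g (x * z) - g x * z - x * g z)
      = ((g (x * z) - g x * z - x * g z) - (g (x * z) - g x * z - x * g z) * (x * z))
        - ((g (x * -z) - g x * -z - x * g (-z))
            - (g (x * -z) - g x * -z - x * g (-z)) * (x * -z)) := by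
    simp only [mul_neg, map_neg, neg_neg, neg_mul, sub_mul, add_mul, mul_assoc,
      sub_neg_eq_add]
    abel
  have hdd := key.trans (by rw [h1z, h2z, sub_zero])
  have hD := tor _ hdd
  rw [← sub_eq_zero]
  rw [sub_sub] at hD
  exact hD

include hS2 hS2' in
lemma Zab {a b : R} (h1 : e * a = a) (h2 : a * e = a) (hb1 : e * b = 0) (hb2 : b * e = 0) :
    g (a * b) = g a * b + a * g b := by
  obtain ⟨ca1, ca2, ca3, ca4⟩ := CPa tor he hf hef hfe hef1 g hg hge hgf h1 h2
  obtain ⟨cb1, cb2, cb3, cb4⟩ := CPb tor he hf hef hfe hef1 g hg hge hgf hb1 hb2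
  rw [killC h2 hb1, map_zero, killC ca2 hb1, killC h2 cb1, add_zero]

include hS2 hS2' in
lemma Zaz {a z : R} (h1 : e * a = a) (h2 : a * e = a) (hz1 : z * e = z) (hz2 : e * z = 0) :
    g (a * z) = g a * z + a * g z := by
  obtain ⟨ca1, ca2, ca3, ca4⟩ := CPa tor he hf hef hfe hef1 g hg hge hgf h1 h2
  obtain ⟨cz1, cz2, cz3, cz4⟩ := CPz tor he hf hef hfe hef1 g hg hge hgf hS2' hz1 hz2
  rw [killC h2 hz2, map_zero, killC ca2 hz2, killC h2 cz1, add_zero]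

include hS2 hS2' in
lemma Zxa {x a : R} (hx1 : e * x = x) (hx2 : x * e = 0) (h1 : e * a = a) (h2 : a * e = a) :
    g (x * a) = g x * a + x * g a := by
  obtain ⟨ca1, ca2, ca3, ca4⟩ := CPa tor he hf hef hfe hef1 g hg hge hgf h1 h2
  obtain ⟨cx1, cx2, cx3, cx4⟩ := CPx tor he hf hef hfe hef1 g hg hge hgf hS2 hx1 hx2
  rw [killB hx2 h1, map_zero, killA cx2 h1, killB hx2 ca1, add_zero]

include hS2 hS2' in
lemma Zxy {x y : R} (hx1 : e * x = x) (hx2 : x * e = 0) (hy1 : e * y = y) (hy2 : y * e = 0) :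
    g (x * y) = g x * y + x * g y := by
  obtain ⟨cx1, cx2, cx3, cx4⟩ := CPx tor he hf hef hfe hef1 g hg hge hgf hS2 hx1 hx2
  obtain ⟨cy1, cy2, cy3, cy4⟩ := CPx tor he hf hef hfe hef1 g hg hge hgf hS2 hy1 hy2
  rw [killB hx2 hy1, map_zero, killA cx2 hy1, killB hx2 cy1, add_zero]

include hS2 hS2' in
lemma Zzw {z w : R} (hz1 : z * e = z) (hz2 : e * z = 0) (hw1 : w * e = w) (hw2 : e * w = 0) :
    g (z * w) = g z * w + z * g w := by
  obtain ⟨cz1, cz2, cz3, cz4⟩ := CPz tor he hf hef hfe hef1 g hg hge hgf hS2' hz1 hz2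
  obtain ⟨cw1, cw2, cw3, cw4⟩ := CPz tor he hf hef hfe hef1 g hg hge hgf hS2' hw1 hw2
  rw [killC hz1 hw2, map_zero, killC cz2 hw2, killC hz1 cw1, add_zero]

include hS2 hS2' in
lemma Zzb {z b : R} (hz1 : z * e = z) (hz2 : e * z = 0) (hb1 : e * b = 0) (hb2 : b * e = 0) :
    g (z * b) = g z * b + z * g b := by
  obtain ⟨cz1, cz2, cz3, cz4⟩ := CPz tor he hf hef hfe hef1 g hg hge hgf hS2' hz1 hz2
  obtain ⟨cb1, cb2, cb3, cb4⟩ := CPb tor he hf hef hfe hef1 g hg hge hgf hb1 hb2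
  rw [killC hz1 hb1, map_zero, killC cz2 hb1, killC hz1 cb1, add_zero]

include hS2 hS2' in
lemma Zba {b a : R} (hb1 : e * b = 0) (hb2 : b * e = 0) (h1 : e * a = a) (h2 : a * e = a) :
    g (b * a) = g b * a + b * g a := by
  obtain ⟨ca1, ca2, ca3, ca4⟩ := CPa tor he hf hef hfe hef1 g hg hge hgf h1 h2
  obtain ⟨cb1, cb2, cb3, cb4⟩ := CPb tor he hf hef hfe hef1 g hg hge hgf hb1 hb2
  rw [killB hb2 h1, map_zero, killA cb2 h1, killB hb2 ca1, add_zero]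

include hS2 hS2' in
lemma Zbx {b x : R} (hb1 : e * b = 0) (hb2 : b * e = 0) (hx1 : e * x = x) (hx2 : x * e = 0) :
    g (b * x) = g b * x + b * g x := by
  obtain ⟨cx1, cx2, cx3, cx4⟩ := CPx tor he hf hef hfe hef1 g hg hge hgf hS2 hx1 hx2
  obtain ⟨cb1, cb2, cb3, cb4⟩ := CPb tor he hf hef hfe hef1 g hg hge hgf hb1 hb2
  rw [killB hb2 hx1, map_zero, killA cb2 hx1, killB hb2 cx1, add_zero]

end Two
end One


section MatrixPart

open Matrix

variable {A : Type*} [Ring A] {n : ℕ}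

local notation "R" => Matrix (Fin n) (Fin n) A

lemma mtor (h2 : ∀ a : A, a + a = 0 → a = 0) : ∀ M : R, M + M = 0 → M = 0 := by
  intro M h
  ext i j
  have := congrFun (congrFun h i) j
  rw [Matrix.add_apply, Matrix.zero_apply] at this
  exact h2 _ this

lemma mhe (i0 : Fin n) :
    Matrix.single i0 i0 (1 : A) * Matrix.single i0 i0 1 = Matrix.single i0 i0 1 := by
  rw [Matrix.single_mul_single_same, one_mul]

lemma rowkill (i0 : Fin n) (s : R)
    (h : ∀ j, j ≠ i0 → Matrix.single i0 j (1 : A) * s = 0) :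
    (1 - Matrix.single i0 i0 (1 : A)) * s = 0 := by
  rw [sub_mul, one_mul, sub_eq_zero]
  ext k l
  by_cases hk : k = i0
  · rw [hk, Matrix.single_mul_apply_same, one_mul]
  · rw [Matrix.single_mul_apply_of_ne _ _ _ _ _ hk]
    have h2 := congrFun (congrFun (h k hk) i0) l
    rw [Matrix.single_mul_apply_same, one_mul, Matrix.zero_apply] at h2
    exact h2

lemma colkill (i0 : Fin n) (s : R)
    (h : ∀ j, j ≠ i0 → Matrix.single i0 i0 (1 : A) * (s * Matrix.single j i0 (1 : A)) = 0) :
    Matrix.single i0 i0 (1 : A) * (s * (1 - Matrix.single i0 i0 (1 : A))) = 0 := by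
  ext k l
  rw [Matrix.zero_apply]
  by_cases hk : k = i0
  · rw [hk, Matrix.single_mul_apply_same, one_mul, Matrix.mul_sub, Matrix.mul_one,
      Matrix.sub_apply]
    by_cases hl : l = i0
    · rw [hl, Matrix.mul_single_apply_same, mul_one, sub_self]
    · rw [Matrix.mul_single_apply_of_ne _ _ _ _ _ hl, sub_zero]
      have h2 := congrFun (congrFun (h l hl) i0) i0
      rw [Matrix.zero_apply, Matrix.single_mul_apply_same, one_mul,
        Matrix.mul_single_apply_same, mul_one] at h2
      exact h2
  · rw [Matrix.single_mul_apply_of_ne _ _ _ _ _ hk]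

lemma faithX (i0 i1 : Fin n) (d : R)
    (hd1 : Matrix.single i0 i0 (1 : A) * d = d) (hd2 : d * Matrix.single i0 i0 (1 : A) = d)
    (h : d * Matrix.single i0 i1 (1 : A) = 0) : d = 0 := by
  ext k l
  rw [Matrix.zero_apply]
  by_cases hk : k = i0
  · by_cases hl : l = i0
    · have h3 := congrFun (congrFun h i0) i1
      rw [Matrix.mul_single_apply_same, mul_one, Matrix.zero_apply] at h3
      rw [hk, hl]
      exact h3
    · have h3 := congrFun (congrFun hd2 k) l
      rw [Matrix.mul_single_apply_of_ne _ _ _ _ _ hl] at h3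
      exact h3.symm
  · have h3 := congrFun (congrFun hd1 k) l
    rw [Matrix.single_mul_apply_of_ne _ _ _ _ _ hk] at h3
    exact h3.symm

lemma faithB (i0 : Fin n) (d : R)
    (hd1 : Matrix.single i0 i0 (1 : A) * d = 0)
    (h : ∀ k, k ≠ i0 → Matrix.single i0 k (1 : A) * d = 0) : d = 0 := by
  ext k l
  rw [Matrix.zero_apply]
  by_cases hk : k = i0
  · have h3 := congrFun (congrFun hd1 i0) l
    rw [Matrix.single_mul_apply_same, one_mul, Matrix.zero_apply] at h3
    rw [hk]
    exact h3
  · have h3 := congrFun (congrFun (h k hk) i0) l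
    rw [Matrix.single_mul_apply_same, one_mul, Matrix.zero_apply] at h3
    exact h3

lemma faithZ (i0 : Fin n) (d : R)
    (hd2 : d * Matrix.single i0 i0 (1 : A) = 0)
    (h : ∀ k, k ≠ i0 → d * Matrix.single k i0 (1 : A) = 0) : d = 0 := by
  ext k l
  rw [Matrix.zero_apply]
  by_cases hl : l = i0
  · have h3 := congrFun (congrFun hd2 k) i0
    rw [Matrix.mul_single_apply_same, mul_one, Matrix.zero_apply] at h3
    rw [hl]
    exact h3
  · have h3 := congrFun (congrFun (h l hl) k) i0
    rw [Matrix.mul_single_apply_same, mul_one, Matrix.zero_apply] at h3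
    exact h3


lemma step2mat (h2 : ∀ a : A, a + a = 0 → a = 0) (i0 i1 : Fin n) (hne : i0 ≠ i1)
    (g : R →+ R)
    (hg : ∀ U V : R, U * V = 0 → V * U = 0 → g U * V + V * g U + U * g V + g V * U = 0) :
    ∀ x : R, Matrix.single i0 i0 1 * x = x → x * Matrix.single i0 i0 1 = 0 →
      (1 - Matrix.single i0 i0 (1 : A)) * (g x * Matrix.single i0 i0 1) = 0 := by
  have tor := mtor (n := n) h2
  set e : R := Matrix.single i0 i0 1 with hedef
  have he : e * e = e := mhe i0
  have hef : e * (1 - e) = 0 := by rw [mul_sub, mul_one, he, sub_self]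
  have hfe : (1 - e) * e = 0 := by rw [sub_mul, one_mul, he, sub_self]
  have hf : (1 - e) * (1 - e) = 1 - e := by rw [sub_mul, one_mul, hef, sub_zero]
  have hef1 : e + (1 - e) = 1 := by abel
  have hx1' : e * Matrix.single i0 i1 (1 : A) = Matrix.single i0 i1 1 := by
    rw [hedef, Matrix.single_mul_single_same, one_mul]
  have hx2' : Matrix.single i0 i1 (1 : A) * e = 0 := by
    rw [hedef]; exact Matrix.single_mul_single_of_ne _ _ _ _ (Ne.symm hne) _
  have claim1 : ∀ j, j ≠ i0 →
      Matrix.single i0 j (1 : A) * (g (Matrix.single i0 i1 1) * e) = 0 := by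
    intro j hj
    have hb1 : e * Matrix.single i1 j (1 : A) = 0 := by
      rw [hedef]; exact Matrix.single_mul_single_of_ne _ _ _ _ hne _
    have hb2 : Matrix.single i1 j (1 : A) * e = 0 := by
      rw [hedef]; exact Matrix.single_mul_single_of_ne _ _ _ _ hj _
    have hEb : Matrix.single i0 i1 (1 : A) * Matrix.single i1 j 1 = Matrix.single i0 j 1 := by
      rw [Matrix.single_mul_single_same, one_mul]
    have hy1 : e * Matrix.single i0 j (1 : A) = Matrix.single i0 j 1 := by
      rw [hedef, Matrix.single_mul_single_same, one_mul]
    have hy2 : Matrix.single i0 j (1 : A) * e = 0 := by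
      rw [hedef]; exact Matrix.single_mul_single_of_ne _ _ _ _ hj _
    have hstar := star tor he hf hef hfe hef1 g hg hx1' hx2' hb1 hb2
    rw [hEb] at hstar
    have hB := B11 tor he hf hef hfe hef1 g hg hx1' hx2' hy1 hy2
    have hxf : Matrix.single i0 i1 (1 : A) * (1 - e) = Matrix.single i0 i1 1 := by
      rw [mul_sub, mul_one, hx2', sub_zero]
    have hkey : Matrix.single i0 i1 (1 : A) * (g (Matrix.single i0 j 1) * e)
        = Matrix.single i0 j (1 : A) * (g (Matrix.single i0 i1 1) * e) := by
      calc Matrix.single i0 i1 (1 : A) * (g (Matrix.single i0 j 1) * e)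
          = (Matrix.single i0 i1 (1 : A) * (1 - e)) * (g (Matrix.single i0 j 1) * e) := by
            rw [hxf]
        _ = Matrix.single i0 i1 (1 : A) * ((1 - e) * (g (Matrix.single i0 j 1) * e)) := by
            rw [mul_assoc]
        _ = Matrix.single i0 i1 (1 : A)
              * (Matrix.single i1 j 1 * (g (Matrix.single i0 i1 1) * e)) := by rw [hstar]
        _ = (Matrix.single i0 i1 (1 : A) * Matrix.single i1 j 1)
              * (g (Matrix.single i0 i1 1) * e) := by rw [mul_assoc]
        _ = Matrix.single i0 j (1 : A) * (g (Matrix.single i0 i1 1) * e) := by rw [hEb]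
    rw [hkey] at hB
    exact tor _ hB
  have ht : (1 - e) * (g (Matrix.single i0 i1 1) * e) = 0 := rowkill i0 _ claim1
  intro x hx1 hx2
  have claim3 : ∀ j, j ≠ i0 → Matrix.single i0 j (1 : A) * (g x * e) = 0 := by
    intro j hj
    have hb1 : e * Matrix.single i1 j (1 : A) = 0 := by
      rw [hedef]; exact Matrix.single_mul_single_of_ne _ _ _ _ hne _
    have hb2 : Matrix.single i1 j (1 : A) * e = 0 := by
      rw [hedef]; exact Matrix.single_mul_single_of_ne _ _ _ _ hj _
    have hEb : Matrix.single i0 i1 (1 : A) * Matrix.single i1 j 1 = Matrix.single i0 j 1 := by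
      rw [Matrix.single_mul_single_same, one_mul]
    have hy1 : e * Matrix.single i0 j (1 : A) = Matrix.single i0 j 1 := by
      rw [hedef, Matrix.single_mul_single_same, one_mul]
    have hy2 : Matrix.single i0 j (1 : A) * e = 0 := by
      rw [hedef]; exact Matrix.single_mul_single_of_ne _ _ _ _ hj _
    have hstar := star tor he hf hef hfe hef1 g hg hx1' hx2' hb1 hb2
    rw [hEb] at hstar
    have hbt : Matrix.single i1 j (1 : A) * (g (Matrix.single i0 i1 1) * e) = 0 := by
      have hbf : Matrix.single i1 j (1 : A) * (1 - e) = Matrix.single i1 j 1 := by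
        rw [mul_sub, mul_one, hb2, sub_zero]
      calc Matrix.single i1 j (1 : A) * (g (Matrix.single i0 i1 1) * e)
          = (Matrix.single i1 j (1 : A) * (1 - e)) * (g (Matrix.single i0 i1 1) * e) := by
            rw [hbf]
        _ = Matrix.single i1 j (1 : A) * ((1 - e) * (g (Matrix.single i0 i1 1) * e)) := by
            rw [mul_assoc]
        _ = 0 := by rw [ht, mul_zero]
    have hB := B11 tor he hf hef hfe hef1 g hg hx1 hx2 hy1 hy2
    have hxf : x * (1 - e) = x := by rw [mul_sub, mul_one, hx2, sub_zero]
    have hzero : x * (g (Matrix.single i0 j 1) * e) = 0 := by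
      calc x * (g (Matrix.single i0 j 1) * e)
          = (x * (1 - e)) * (g (Matrix.single i0 j 1) * e) := by rw [hxf]
        _ = x * ((1 - e) * (g (Matrix.single i0 j 1) * e)) := by rw [mul_assoc]
        _ = x * (Matrix.single i1 j 1 * (g (Matrix.single i0 i1 1) * e)) := by rw [hstar]
        _ = 0 := by rw [hbt, mul_zero]
    rw [hzero, add_zero] at hB
    exact hB
  exact rowkill i0 _ claim3

lemma step2mat' (h2 : ∀ a : A, a + a = 0 → a = 0) (i0 i1 : Fin n) (hne : i0 ≠ i1)
    (g : R →+ R)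
    (hg : ∀ U V : R, U * V = 0 → V * U = 0 → g U * V + V * g U + U * g V + g V * U = 0) :
    ∀ z : R, z * Matrix.single i0 i0 1 = z → Matrix.single i0 i0 1 * z = 0 →
      Matrix.single i0 i0 (1 : A) * (g z * (1 - Matrix.single i0 i0 1)) = 0 := by
  have tor := mtor (n := n) h2
  set e : R := Matrix.single i0 i0 1 with hedef
  have he : e * e = e := mhe i0
  have hef : e * (1 - e) = 0 := by rw [mul_sub, mul_one, he, sub_self]
  have hfe : (1 - e) * e = 0 := by rw [sub_mul, one_mul, he, sub_self]
  have hf : (1 - e) * (1 - e) = 1 - e := by rw [sub_mul, one_mul, hef, sub_zero]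
  have hef1 : e + (1 - e) = 1 := by abel
  have hz1' : Matrix.single i1 i0 (1 : A) * e = Matrix.single i1 i0 1 := by
    rw [hedef, Matrix.single_mul_single_same, mul_one]
  have hz2' : e * Matrix.single i1 i0 (1 : A) = 0 := by
    rw [hedef]; exact Matrix.single_mul_single_of_ne _ _ _ _ hne _
  have claim1 : ∀ j, j ≠ i0 →
      e * (g (Matrix.single i1 i0 1) * Matrix.single j i0 (1 : A)) = 0 := by
    intro j hj
    have hb1 : e * Matrix.single j i1 (1 : A) = 0 := by
      rw [hedef]; exact Matrix.single_mul_single_of_ne _ _ _ _ (Ne.symm hj) _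
    have hb2 : Matrix.single j i1 (1 : A) * e = 0 := by
      rw [hedef]; exact Matrix.single_mul_single_of_ne _ _ _ _ (Ne.symm hne) _
    have hbz : Matrix.single j i1 (1 : A) * Matrix.single i1 i0 1 = Matrix.single j i0 1 := by
      rw [Matrix.single_mul_single_same, one_mul]
    have hw1 : Matrix.single j i0 (1 : A) * e = Matrix.single j i0 1 := by
      rw [hedef, Matrix.single_mul_single_same, mul_one]
    have hw2 : e * Matrix.single j i0 (1 : A) = 0 := by
      rw [hedef]; exact Matrix.single_mul_single_of_ne _ _ _ _ (Ne.symm hj) _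
    have hstar := star' tor he hf hef hfe hef1 g hg hz1' hz2' hb1 hb2
    rw [hbz] at hstar
    have hB := B11' tor he hf hef hfe hef1 g hg hz1' hz2' hw1 hw2
    have hfz : (1 - e) * Matrix.single i1 i0 (1 : A) = Matrix.single i1 i0 1 := by
      rw [sub_mul, one_mul, hz2', sub_zero]
    have hkey : e * (g (Matrix.single j i0 1) * Matrix.single i1 i0 (1 : A))
        = e * (g (Matrix.single i1 i0 1) * Matrix.single j i0 1) := by
      have ha : g (Matrix.single j i0 1) * ((1 - e) * Matrix.single i1 i0 (1 : A))
          = g (Matrix.single j i0 1) * Matrix.single i1 i0 1 := by rw [hfz]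
      calc e * (g (Matrix.single j i0 1) * Matrix.single i1 i0 (1 : A))
          = e * (g (Matrix.single j i0 1) * ((1 - e) * Matrix.single i1 i0 1)) := by
            rw [ha]
        _ = (e * (g (Matrix.single j i0 1) * (1 - e))) * Matrix.single i1 i0 1 := by
            rw [mul_assoc, mul_assoc]
        _ = (e * (g (Matrix.single i1 i0 1) * Matrix.single j i1 1))
              * Matrix.single i1 i0 1 := by rw [hstar]
        _ = e * (g (Matrix.single i1 i0 1) * (Matrix.single j i1 1
              * Matrix.single i1 i0 1)) := by rw [mul_assoc, mul_assoc]
        _ = e * (g (Matrix.single i1 i0 1) * Matrix.single j i0 1) := by rw [hbz]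
    rw [hkey] at hB
    exact tor _ hB
  have ht : e * (g (Matrix.single i1 i0 1) * (1 - e)) = 0 := colkill i0 _ claim1
  intro z hz1 hz2
  have claim3 : ∀ j, j ≠ i0 → e * (g z * Matrix.single j i0 (1 : A)) = 0 := by
    intro j hj
    have hb1 : e * Matrix.single j i1 (1 : A) = 0 := by
      rw [hedef]; exact Matrix.single_mul_single_of_ne _ _ _ _ (Ne.symm hj) _
    have hb2 : Matrix.single j i1 (1 : A) * e = 0 := by
      rw [hedef]; exact Matrix.single_mul_single_of_ne _ _ _ _ (Ne.symm hne) _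
    have hbz : Matrix.single j i1 (1 : A) * Matrix.single i1 i0 1 = Matrix.single j i0 1 := by
      rw [Matrix.single_mul_single_same, one_mul]
    have hw1 : Matrix.single j i0 (1 : A) * e = Matrix.single j i0 1 := by
      rw [hedef, Matrix.single_mul_single_same, mul_one]
    have hw2 : e * Matrix.single j i0 (1 : A) = 0 := by
      rw [hedef]; exact Matrix.single_mul_single_of_ne _ _ _ _ (Ne.symm hj) _
    have hstar := star' tor he hf hef hfe hef1 g hg hz1' hz2' hb1 hb2
    rw [hbz] at hstar
    have htb : e * (g (Matrix.single i1 i0 1) * Matrix.single j i1 (1 : A)) = 0 := by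
      have hfb : (1 - e) * Matrix.single j i1 (1 : A) = Matrix.single j i1 1 := by
        rw [sub_mul, one_mul, hb1, sub_zero]
      have ha : g (Matrix.single i1 i0 1) * ((1 - e) * Matrix.single j i1 (1 : A))
          = g (Matrix.single i1 i0 1) * Matrix.single j i1 1 := by rw [hfb]
      calc e * (g (Matrix.single i1 i0 1) * Matrix.single j i1 (1 : A))
          = e * (g (Matrix.single i1 i0 1) * ((1 - e) * Matrix.single j i1 1)) := by rw [ha]
        _ = (e * (g (Matrix.single i1 i0 1) * (1 - e))) * Matrix.single j i1 1 := by
            rw [mul_assoc, mul_assoc]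
        _ = 0 := by rw [ht, zero_mul]
    have hB := B11' tor he hf hef hfe hef1 g hg hz1 hz2 hw1 hw2
    have hzero : e * (g (Matrix.single j i0 1) * z) = 0 := by
      have hfz2 : (1 - e) * z = z := by rw [sub_mul, one_mul, hz2, sub_zero]
      have ha : g (Matrix.single j i0 1) * ((1 - e) * z) = g (Matrix.single j i0 1) * z := by
        rw [hfz2]
      calc e * (g (Matrix.single j i0 1) * z)
          = e * (g (Matrix.single j i0 1) * ((1 - e) * z)) := by rw [ha]
        _ = (e * (g (Matrix.single j i0 1) * (1 - e))) * z := by rw [mul_assoc, mul_assoc]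
        _ = (e * (g (Matrix.single i1 i0 1) * Matrix.single j i1 1)) * z := by rw [hstar]
        _ = 0 := by rw [htb, zero_mul]
    rw [hzero, add_zero] at hB
    exact hB
  exact colkill i0 _ claim3


section Faith

variable (h2 : ∀ a : A, a + a = 0 → a = 0) (i0 i1 : Fin n) (hne : i0 ≠ i1)
variable (g : Matrix (Fin n) (Fin n) A →+ Matrix (Fin n) (Fin n) A)

include h2 hne

lemma der5
    (hg : ∀ U V : Matrix (Fin n) (Fin n) A,
      U * V = 0 → V * U = 0 → g U * V + V * g U + U * g V + g V * U = 0)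
    (hge : g (Matrix.single i0 i0 (1 : A)) = 0)
    (hgf : g (1 - Matrix.single i0 i0 (1 : A)) = 0) {a a' : R} (h1 : Matrix.single i0 i0 1 * a = a) (h2' : a * Matrix.single i0 i0 1 = a)
    (h1' : Matrix.single i0 i0 1 * a' = a') (h2'' : a' * Matrix.single i0 i0 1 = a') :
    g (a * a') = g a * a' + a * g a' := by
  have tor := mtor (n := n) h2
  set e : R := Matrix.single i0 i0 1 with hedef
  have he : e * e = e := mhe i0
  have hef : e * (1 - e) = 0 := by rw [mul_sub, mul_one, he, sub_self]
  have hfe : (1 - e) * e = 0 := by rw [sub_mul, one_mul, he, sub_self]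
  have hf : (1 - e) * (1 - e) = 1 - e := by rw [sub_mul, one_mul, hef, sub_zero]
  have hef1 : e + (1 - e) = 1 := by abel
  have hS2 := step2mat h2 i0 i1 hne g hg
  set x : R := Matrix.single i0 i1 1 with hxdef
  have mx1 : e * x = x := by rw [hedef, hxdef, Matrix.single_mul_single_same, one_mul]
  have mx2 : x * e = 0 := by
    rw [hedef, hxdef]; exact Matrix.single_mul_single_of_ne _ _ _ _ (Ne.symm hne) _
  have ma1 : e * (a * a') = a * a' := by rw [← mul_assoc, h1]
  have ma2 : (a * a') * e = a * a' := by rw [mul_assoc, h2'']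
  have mad1 : e * (a' * x) = a' * x := by rw [← mul_assoc, h1']
  have mad2 : (a' * x) * e = 0 := by rw [mul_assoc, mx2, mul_zero]
  have e1 := PR1 tor he hf hef hfe hef1 g hg hge hgf hS2 ma1 ma2 mx1 mx2
  have e2 := PR1 tor he hf hef hfe hef1 g hg hge hgf hS2 h1 h2' mad1 mad2
  have e3 := PR1 tor he hf hef hfe hef1 g hg hge hgf hS2 h1' h2'' mx1 mx2
  obtain ⟨ca1, ca2, ca3, ca4⟩ := CPa tor he hf hef hfe hef1 g hg hge hgf h1 h2'
  obtain ⟨cb1, cb2, cb3, cb4⟩ := CPa tor he hf hef hfe hef1 g hg hge hgf h1' h2''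
  obtain ⟨cc1, cc2, cc3, cc4⟩ := CPa tor he hf hef hfe hef1 g hg hge hgf ma1 ma2
  set d : R := g (a * a') - (g a * a' + a * g a') with hd
  have hd1 : e * d = d := by
    rw [hd, mul_sub, mul_add, cc1, ← mul_assoc, ca1, ← mul_assoc, h1]
  have hd2 : d * e = d := by
    rw [hd, sub_mul, add_mul, cc2, mul_assoc, h2'', mul_assoc, cb2]
  have hfin : d * x = 0 := by
    have E : g (a * (a' * x)) = g (a * a') * x + (a * a') * g x := by
      rw [← mul_assoc]; exact e1
    have E2 : g (a * (a' * x)) = g a * (a' * x) + a * (g a' * x + a' * g x) := by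
      rw [e2, e3]
    have E4 : g (a * a') * x = g a * (a' * x) + a * (g a' * x + a' * g x) - (a * a') * g x := by
      rw [← E.symm.trans E2]; abel
    rw [hd, sub_mul, add_mul, E4]
    simp only [mul_add, mul_assoc]
    abel
  have hz := faithX i0 i1 d hd1 hd2 hfin
  rw [hd] at hz
  exact sub_eq_zero.mp hz

lemma der6
    (hg : ∀ U V : Matrix (Fin n) (Fin n) A,
      U * V = 0 → V * U = 0 → g U * V + V * g U + U * g V + g V * U = 0)
    (hge : g (Matrix.single i0 i0 (1 : A)) = 0)
    (hgf : g (1 - Matrix.single i0 i0 (1 : A)) = 0)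
    {b b' : R} (hb1 : Matrix.single i0 i0 1 * b = 0) (hb2 : b * Matrix.single i0 i0 1 = 0)
    (hb1' : Matrix.single i0 i0 1 * b' = 0) (hb2' : b' * Matrix.single i0 i0 1 = 0) :
    g (b * b') = g b * b' + b * g b' := by
  have tor := mtor (n := n) h2
  set e : R := Matrix.single i0 i0 1 with hedef
  have he : e * e = e := mhe i0
  have hef : e * (1 - e) = 0 := by rw [mul_sub, mul_one, he, sub_self]
  have hfe : (1 - e) * e = 0 := by rw [sub_mul, one_mul, he, sub_self]
  have hf : (1 - e) * (1 - e) = 1 - e := by rw [sub_mul, one_mul, hef, sub_zero]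
  have hef1 : e + (1 - e) = 1 := by abel
  have hS2 := step2mat h2 i0 i1 hne g hg
  have mbb1 : e * (b * b') = 0 := by rw [← mul_assoc, hb1, zero_mul]
  have mbb2 : (b * b') * e = 0 := by rw [mul_assoc, hb2', mul_zero]
  obtain ⟨ca1, ca2, ca3, ca4⟩ := CPb tor he hf hef hfe hef1 g hg hge hgf hb1 hb2
  obtain ⟨cbp1, cbp2, cbp3, cbp4⟩ := CPb tor he hf hef hfe hef1 g hg hge hgf hb1' hb2'
  obtain ⟨cc1, cc2, cc3, cc4⟩ := CPb tor he hf hef hfe hef1 g hg hge hgf mbb1 mbb2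
  set d : R := g (b * b') - (g b * b' + b * g b') with hd
  have hd1 : e * d = 0 := by
    rw [hd, mul_sub, mul_add, cc1, ← mul_assoc, ca1, zero_mul, ← mul_assoc, hb1, zero_mul,
      add_zero, sub_zero]
  have hfin : ∀ k, k ≠ i0 → Matrix.single i0 k (1 : A) * d = 0 := by
    intro k hk
    set x : R := Matrix.single i0 k 1 with hxdef
    have mx1 : e * x = x := by rw [hedef, hxdef, Matrix.single_mul_single_same, one_mul]
    have mx2 : x * e = 0 := by
      rw [hedef, hxdef]; exact Matrix.single_mul_single_of_ne _ _ _ _ hk _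
    have mxb1 : e * (x * b) = x * b := by rw [← mul_assoc, mx1]
    have mxb2 : (x * b) * e = 0 := by rw [mul_assoc, hb2, mul_zero]
    have e1 := PR2 tor he hf hef hfe hef1 g hg hge hgf hS2 mx1 mx2 mbb1 mbb2
    have e2 := PR2 tor he hf hef hfe hef1 g hg hge hgf hS2 mxb1 mxb2 hb1' hb2'
    have e3 := PR2 tor he hf hef hfe hef1 g hg hge hgf hS2 mx1 mx2 hb1 hb2
    have E : g (x * (b * b')) = g x * (b * b') + x * g (b * b') := e1
    have E2 : g (x * (b * b')) = (g x * b + x * g b) * b' + (x * b) * g b' := by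
      rw [← mul_assoc, e2, e3]
    have E4 : x * g (b * b') = (g x * b + x * g b) * b' + (x * b) * g b' - g x * (b * b') := by
      rw [← E.symm.trans E2]; abel
    rw [hd, mul_sub, mul_add, E4]
    simp only [add_mul, mul_assoc]
    abel
  have hz := faithB i0 d hd1 hfin
  rw [hd] at hz
  exact sub_eq_zero.mp hz

lemma der8
    (hg : ∀ U V : Matrix (Fin n) (Fin n) A,
      U * V = 0 → V * U = 0 → g U * V + V * g U + U * g V + g V * U = 0)
    (hge : g (Matrix.single i0 i0 (1 : A)) = 0)
    (hgf : g (1 - Matrix.single i0 i0 (1 : A)) = 0)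
    (hg1 : g 1 = 0)
    {z x : R} (hz1 : z * Matrix.single i0 i0 1 = z) (hz2 : Matrix.single i0 i0 1 * z = 0)
    (hx1 : Matrix.single i0 i0 1 * x = x) (hx2 : x * Matrix.single i0 i0 1 = 0) :
    g (z * x) = g z * x + z * g x := by
  have tor := mtor (n := n) h2
  set e : R := Matrix.single i0 i0 1 with hedef
  have he : e * e = e := mhe i0
  have hef : e * (1 - e) = 0 := by rw [mul_sub, mul_one, he, sub_self]
  have hfe : (1 - e) * e = 0 := by rw [sub_mul, one_mul, he, sub_self]
  have hf : (1 - e) * (1 - e) = 1 - e := by rw [sub_mul, one_mul, hef, sub_zero]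
  have hef1 : e + (1 - e) = 1 := by abel
  have hS2 := step2mat h2 i0 i1 hne g hg
  have hS2' := step2mat' h2 i0 i1 hne g hg
  have mzx1 : e * (z * x) = 0 := by rw [← mul_assoc, hz2, zero_mul]
  have mzx2 : (z * x) * e = 0 := by rw [mul_assoc, hx2, mul_zero]
  obtain ⟨cz1, cz2, cz3, cz4⟩ := CPz tor he hf hef hfe hef1 g hg hge hgf hS2' hz1 hz2
  obtain ⟨cx1, cx2, cx3, cx4⟩ := CPx tor he hf hef hfe hef1 g hg hge hgf hS2 hx1 hx2
  obtain ⟨cc1, cc2, cc3, cc4⟩ := CPb tor he hf hef hfe hef1 g hg hge hgf mzx1 mzx2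
  set d : R := g (z * x) - (g z * x + z * g x) with hd
  have hd2 : d * e = 0 := by
    rw [hd, sub_mul, add_mul, cc2, mul_assoc, hx2, mul_zero, mul_assoc, cx2, mul_zero,
      add_zero, sub_zero]
  have hfin : ∀ k, k ≠ i0 → d * Matrix.single k i0 (1 : A) = 0 := by
    intro k hk
    set w : R := Matrix.single k i0 1 with hwdef
    have mw1 : w * e = w := by rw [hedef, hwdef, Matrix.single_mul_single_same, mul_one]
    have mw2 : e * w = 0 := by
      rw [hedef, hwdef]; exact Matrix.single_mul_single_of_ne _ _ _ _ (Ne.symm hk) _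
    have mxw1 : e * (x * w) = x * w := by rw [← mul_assoc, hx1]
    have mxw2 : (x * w) * e = x * w := by rw [mul_assoc, mw1]
    have e1 := PR4 tor he hf hef hfe hef1 g hg hge hgf hS2' mzx1 mzx2 mw1 mw2
    have e2 := PR3 tor he hf hef hfe hef1 g hg hge hgf hS2' hz1 hz2 mxw1 mxw2
    have e3 := PR7 tor he hf hef hfe hef1 g hg hge hgf hg1 hS2 hS2' hx1 hx2 mw1 mw2
    have E : g (z * (x * w)) = g (z * x) * w + (z * x) * g w := by
      rw [← mul_assoc]; exact e1
    have E2 : g (z * (x * w)) = g z * (x * w) + z * (g x * w + x * g w) := by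
      rw [e2, e3]
    have E4 : g (z * x) * w = g z * (x * w) + z * (g x * w + x * g w) - (z * x) * g w := by
      rw [← E.symm.trans E2]; abel
    rw [hd, sub_mul, add_mul, E4]
    simp only [mul_add, mul_assoc]
    abel
  have hz0 := faithZ i0 d hd2 hfin
  rw [hd] at hz0
  exact sub_eq_zero.mp hz0

end Faith

end MatrixPart




end MRD

open Matrix MRD in
theorem matrix_ring_decomposition
    {A : Type*} [Ring A]
    (h2 : ∀ a : A, a + a = 0 → a = 0)
    (n : ℕ) (hn : 2 ≤ n)
    (φ : Matrix (Fin n) (Fin n) A →+ Matrix (Fin n) (Fin n) A)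
    (hP : ∀ U V : Matrix (Fin n) (Fin n) A, U * V = 0 → V * U = 0 →
      φ U * V + V * φ U + U * φ V + φ V * U = 0) :
    (∃ δ η : Matrix (Fin n) (Fin n) A →+ Matrix (Fin n) (Fin n) A,
      (∀ U V : Matrix (Fin n) (Fin n) A, δ (U * V) = δ U * V + U * δ V) ∧
      (∀ U : Matrix (Fin n) (Fin n) A, η U = η 1 * U ∧ η U = U * η 1) ∧
      (∀ U : Matrix (Fin n) (Fin n) A, φ U = δ U + η U)) ∧
    (φ 1 = 0 → ∀ U V : Matrix (Fin n) (Fin n) A,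
      φ (U * V) = φ U * V + U * φ V) := by
  have h0n : 0 < n := by omega
  have h1n : 1 < n := by omega
  set i0 : Fin n := ⟨0, h0n⟩ with hi0
  set i1 : Fin n := ⟨1, h1n⟩ with hi1
  have hne : i0 ≠ i1 := Fin.ne_of_val_ne (by rw [hi0, hi1]; simp)
  have tor := mtor (n := n) h2
  set e : Matrix (Fin n) (Fin n) A := Matrix.single i0 i0 1 with hedef
  have he : e * e = e := mhe i0
  have hef : e * (1 - e) = 0 := by rw [mul_sub, mul_one, he, sub_self]
  have hfe : (1 - e) * e = 0 := by rw [sub_mul, one_mul, he, sub_self]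
  have hf : (1 - e) * (1 - e) = 1 - e := by rw [sub_mul, one_mul, hef, sub_zero]
  have hef1 : e + (1 - e) = 1 := by abel
  -- φ-phase component facts
  have hA22e := GA22 tor he hf hef hfe hef1 φ hP he he
  have hB11f := GB11 tor he hf hef hfe hef1 φ hP hef hfe
  have hC12 := GC12 tor he hf hef hfe hef1 φ hP
  have hC21 := GC21 tor he hf hef hfe hef1 φ hP
  have hsplit : φ 1 = φ e + φ (1 - e) := by rw [← map_add, hef1]
  have hc12 : e * (φ 1 * (1 - e)) = 0 := by rw [hsplit, add_mul, mul_add]; exact hC12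
  have hc21 : (1 - e) * (φ 1 * e) = 0 := by rw [hsplit, add_mul, mul_add]; exact hC21
  have hcdiag : φ 1 = e * (φ 1 * e) + (1 - e) * (φ 1 * (1 - e)) := by
    have hp := peirce tor he hf hef hfe hef1 φ hP (φ 1)
    rw [hc12, hc21, add_zero, zero_add] at hp
    exact hp.symm
  have hcomm_x : ∀ x : Matrix (Fin n) (Fin n) A,
      e * x = x → x * e = 0 → φ 1 * x = x * φ 1 := by
    intro x h1 h2x
    have hx3 : x * (1 - e) = x := memX_f hef1 h2x
    have hGXc := GXc tor he hf hef hfe hef1 φ hP h1 h2x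
    have s1 : φ 1 * x = e * (φ e * x) := by
      calc φ 1 * x = (e * (φ 1 * e) + (1 - e) * (φ 1 * (1 - e))) * x := by rw [← hcdiag]
      _ = (e * (φ 1 * e)) * x + ((1 - e) * (φ 1 * (1 - e))) * x := add_mul _ _ _
      _ = e * (φ 1 * (e * x)) + (1 - e) * (φ 1 * ((1 - e) * x)) := by
          rw [mul_assoc, mul_assoc, mul_assoc, mul_assoc]
      _ = e * (φ 1 * x) := by rw [h1, memX_f' hfe h1, mul_zero, mul_zero, add_zero]
      _ = e * (φ e * x) + e * (φ (1 - e) * x) := by rw [hsplit, add_mul, mul_add]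
      _ = e * (φ e * x) + e * (φ (1 - e) * (e * x)) := by rw [h1]
      _ = e * (φ e * x) + (e * (φ (1 - e) * e)) * x := by rw [mul_assoc, mul_assoc]
      _ = e * (φ e * x) := by rw [hB11f, zero_mul, add_zero]
    have s2 : x * φ 1 = x * (φ (1 - e) * (1 - e)) := by
      calc x * φ 1 = x * (e * (φ 1 * e) + (1 - e) * (φ 1 * (1 - e))) := by rw [← hcdiag]
      _ = (x * e) * (φ 1 * e) + (x * (1 - e)) * (φ 1 * (1 - e)) := by
          simp only [mul_add, ← mul_assoc]
      _ = x * (φ 1 * (1 - e)) := by rw [h2x, zero_mul, hx3, zero_add]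
      _ = x * (φ e * (1 - e)) + x * (φ (1 - e) * (1 - e)) := by rw [hsplit, add_mul, mul_add]
      _ = x * ((1 - e) * (φ e * (1 - e))) + x * (φ (1 - e) * (1 - e)) := by
          rw [show x * ((1 - e) * (φ e * (1 - e))) = (x * (1 - e)) * (φ e * (1 - e)) from
            (mul_assoc _ _ _).symm, hx3]
      _ = x * (φ (1 - e) * (1 - e)) := by rw [hA22e, mul_zero, zero_add]
    rw [s1, s2, hGXc]
  have hcomm_z : ∀ z : Matrix (Fin n) (Fin n) A,
      z * e = z → e * z = 0 → φ 1 * z = z * φ 1 := by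
    intro z h1 h2z
    have hz3 : (1 - e) * z = z := memZ_f hef1 h2z
    have hGZc := GZc tor he hf hef hfe hef1 φ hP h1 h2z
    have s1 : φ 1 * z = (1 - e) * (φ (1 - e) * z) := by
      calc φ 1 * z = (e * (φ 1 * e) + (1 - e) * (φ 1 * (1 - e))) * z := by rw [← hcdiag]
      _ = e * (φ 1 * (e * z)) + (1 - e) * (φ 1 * ((1 - e) * z)) := by
          rw [add_mul, mul_assoc, mul_assoc, mul_assoc, mul_assoc]
      _ = (1 - e) * (φ 1 * z) := by rw [h2z, mul_zero, mul_zero, hz3, zero_add]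
      _ = (1 - e) * (φ e * z) + (1 - e) * (φ (1 - e) * z) := by rw [hsplit, add_mul, mul_add]
      _ = ((1 - e) * (φ e * (1 - e))) * z + (1 - e) * (φ (1 - e) * z) := by
          rw [show ((1 - e) * (φ e * (1 - e))) * z = (1 - e) * (φ e * ((1 - e) * z)) from by
            rw [mul_assoc, mul_assoc], hz3]
      _ = (1 - e) * (φ (1 - e) * z) := by rw [hA22e, zero_mul, zero_add]
    have s2 : z * φ 1 = z * (φ e * e) := by
      calc z * φ 1 = z * (e * (φ 1 * e) + (1 - e) * (φ 1 * (1 - e))) := by rw [← hcdiag]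
      _ = (z * e) * (φ 1 * e) + (z * (1 - e)) * (φ 1 * (1 - e)) := by
          simp only [mul_add, ← mul_assoc]
      _ = z * (φ 1 * e) := by rw [h1, memZ_f' hef h1, zero_mul, add_zero]
      _ = z * (φ e * e) + z * (φ (1 - e) * e) := by rw [hsplit, add_mul, mul_add]
      _ = z * (φ e * e) := by rw [killC h1 hB11f, add_zero]
    rw [s1, s2, hGZc]
  have hcE : ∀ (k l : Fin n) (a : A),
      φ 1 * Matrix.single k l a = Matrix.single k l a * φ 1 := by
    intro k l a
    by_cases hk : k = i0 <;> by_cases hl : l = i0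
    · rw [hk, hl]
      have hfac : Matrix.single i0 i0 a = Matrix.single i0 i1 a * Matrix.single i1 i0 1 := by
        rw [Matrix.single_mul_single_same, mul_one]
      have hX := hcomm_x (Matrix.single i0 i1 a)
        (by rw [hedef, Matrix.single_mul_single_same, one_mul])
        (by rw [hedef]; exact Matrix.single_mul_single_of_ne _ _ _ _ (Ne.symm hne) _)
      have hZ := hcomm_z (Matrix.single i1 i0 1)
        (by rw [hedef, Matrix.single_mul_single_same, mul_one])
        (by rw [hedef]; exact Matrix.single_mul_single_of_ne _ _ _ _ hne _)
      rw [hfac, ← mul_assoc, hX, mul_assoc, hZ, ← mul_assoc]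
    · rw [hk]
      exact hcomm_x _ (by rw [hedef, Matrix.single_mul_single_same, one_mul])
        (by rw [hedef]; exact Matrix.single_mul_single_of_ne _ _ _ _ hl _)
    · rw [hl]
      exact hcomm_z _ (by rw [hedef, Matrix.single_mul_single_same, mul_one])
        (by rw [hedef]; exact Matrix.single_mul_single_of_ne _ _ _ _ (Ne.symm hk) _)
    · have hfac : Matrix.single k l a = Matrix.single k i0 a * Matrix.single i0 l 1 := by
        rw [Matrix.single_mul_single_same, mul_one]
      have hZ := hcomm_z (Matrix.single k i0 a)
        (by rw [hedef, Matrix.single_mul_single_same, mul_one])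
        (by rw [hedef]; exact Matrix.single_mul_single_of_ne _ _ _ _ (Ne.symm hk) _)
      have hX := hcomm_x (Matrix.single i0 l 1)
        (by rw [hedef, Matrix.single_mul_single_same, one_mul])
        (by rw [hedef]; exact Matrix.single_mul_single_of_ne _ _ _ _ hl _)
      rw [hfac, ← mul_assoc, hZ, mul_assoc, hX, ← mul_assoc]
  have hcomm : ∀ M : Matrix (Fin n) (Fin n) A, φ 1 * M = M * φ 1 := by
    intro M
    conv_lhs => rw [matrix_eq_sum_single M]
    conv_rhs => rw [matrix_eq_sum_single M]
    rw [Finset.mul_sum, Finset.sum_mul]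
    refine Finset.sum_congr rfl fun i _ => ?_
    rw [Finset.mul_sum, Finset.sum_mul]
    exact Finset.sum_congr rfl fun j _ => hcE i j _
  -- reduction map ψ
  set N : Matrix (Fin n) (Fin n) A := (1 - e) * (φ e * e) - e * (φ e * (1 - e)) with hN
  set ψ : Matrix (Fin n) (Fin n) A →+ Matrix (Fin n) (Fin n) A :=
    AddMonoidHom.mk' (fun U => φ U - (φ 1 * U + (N * U - U * N)))
      (fun U V => by simp only [map_add, mul_add, add_mul]; abel) with hψset
  have hψdef : ∀ U, ψ U = φ U - (φ 1 * U + (N * U - U * N)) := fun U => rfl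
  have hψP : ∀ U V : Matrix (Fin n) (Fin n) A, U * V = 0 → V * U = 0 →
      ψ U * V + V * ψ U + U * ψ V + ψ V * U = 0 := by
    intro U V h1 h2'
    have hcU := hcomm U
    have hcV := hcomm V
    have key : ψ U * V + V * ψ U + U * ψ V + ψ V * U
        = (φ U * V + V * φ U + U * φ V + φ V * U)
          - (((U * V) * φ 1 + (U * V) * φ 1 + (V * U) * φ 1 + (V * U) * φ 1)
             + (N * (U * V) + N * (V * U) - (V * U) * N - (U * V) * N)) := by
      simp only [hψdef, sub_mul, mul_sub, add_mul, mul_add, mul_assoc, hcU, hcV]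
      abel
    rw [key, hP U V h1 h2', h1, h2']
    simp only [mul_zero, zero_mul, add_zero, zero_add, sub_zero, sub_self, neg_zero]
  have hψe : ψ e = 0 := by
    have hNe : N * e = (1 - e) * (φ e * e) := by
      rw [hN, sub_mul]
      have t1 : ((1 - e) * (φ e * e)) * e = (1 - e) * (φ e * e) := by
        rw [mul_assoc, mul_assoc, he]
      have t2 : (e * (φ e * (1 - e))) * e = 0 := by
        rw [mul_assoc, mul_assoc, hfe, mul_zero, mul_zero]
      rw [t1, t2, sub_zero]
    have heN : e * N = -(e * (φ e * (1 - e))) := by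
      rw [hN, mul_sub]
      have t1 : e * ((1 - e) * (φ e * e)) = 0 := by rw [← mul_assoc, hef, zero_mul]
      rw [t1, mul3 he, zero_sub]
    have hce : φ 1 * e = e * (φ e * e) := by
      have h1' : φ 1 * e = e * (φ 1 * e) := by
        calc φ 1 * e = (e * (φ 1 * e) + (1 - e) * (φ 1 * (1 - e))) * e := by rw [← hcdiag]
        _ = e * (φ 1 * (e * e)) + (1 - e) * (φ 1 * ((1 - e) * e)) := by
            rw [add_mul, mul_assoc, mul_assoc, mul_assoc, mul_assoc]
        _ = e * (φ 1 * e) := by rw [he, hfe, mul_zero, mul_zero, add_zero]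
      rw [h1', hsplit, add_mul, mul_add, hB11f, add_zero]
    have hpe := peirce tor he hf hef hfe hef1 φ hP (φ e)
    rw [hA22e, add_zero] at hpe
    have hpz := sub_eq_zero.mpr hpe.symm
    rw [hψdef, hce, hNe, heN, ← hpz]
    abel
  have hψ1 : ψ 1 = 0 := by
    rw [hψdef, mul_one, mul_one, one_mul, sub_self, add_zero, sub_self]
  have hψf : ψ (1 - e) = 0 := by rw [map_sub, hψ1, hψe, sub_zero]
  have hS2ψ := step2mat h2 i0 i1 hne ψ hψP
  have hS2'ψ := step2mat' h2 i0 i1 hne ψ hψP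
  -- full derivation property of ψ
  have hder : ∀ U V : Matrix (Fin n) (Fin n) A, ψ (U * V) = ψ U * V + U * ψ V := by
    intro U V
    have hU := (peirce tor he hf hef hfe hef1 ψ hψP U).symm
    have hV := (peirce tor he hf hef hfe hef1 ψ hψP V).symm
    have ma1 : e * (e * (U * e)) = e * (U * e) := mul3 he _
    have ma2 : (e * (U * e)) * e = e * (U * e) := by rw [mul_assoc, mul_assoc, he]
    have mx1 : e * (e * (U * (1 - e))) = e * (U * (1 - e)) := mul3 he _
    have mx2 : (e * (U * (1 - e))) * e = 0 := by
      rw [mul_assoc, mul_assoc, hfe, mul_zero, mul_zero]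
    have mz1 : ((1 - e) * (U * e)) * e = (1 - e) * (U * e) := by rw [mul_assoc, mul_assoc, he]
    have mz2 : e * ((1 - e) * (U * e)) = 0 := by rw [← mul_assoc, hef, zero_mul]
    have mb1 : e * ((1 - e) * (U * (1 - e))) = 0 := by rw [← mul_assoc, hef, zero_mul]
    have mb2 : ((1 - e) * (U * (1 - e))) * e = 0 := by
      rw [mul_assoc, mul_assoc, hfe, mul_zero, mul_zero]
    have na1 : e * (e * (V * e)) = e * (V * e) := mul3 he _
    have na2 : (e * (V * e)) * e = e * (V * e) := by rw [mul_assoc, mul_assoc, he]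
    have nx1 : e * (e * (V * (1 - e))) = e * (V * (1 - e)) := mul3 he _
    have nx2 : (e * (V * (1 - e))) * e = 0 := by
      rw [mul_assoc, mul_assoc, hfe, mul_zero, mul_zero]
    have nz1 : ((1 - e) * (V * e)) * e = (1 - e) * (V * e) := by rw [mul_assoc, mul_assoc, he]
    have nz2 : e * ((1 - e) * (V * e)) = 0 := by rw [← mul_assoc, hef, zero_mul]
    have nb1 : e * ((1 - e) * (V * (1 - e))) = 0 := by rw [← mul_assoc, hef, zero_mul]
    have nb2 : ((1 - e) * (V * (1 - e))) * e = 0 := by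
      rw [mul_assoc, mul_assoc, hfe, mul_zero, mul_zero]
    have h_aa := der5 h2 i0 i1 hne ψ hψP hψe hψf ma1 ma2 na1 na2
    have h_ax := PR1 tor he hf hef hfe hef1 ψ hψP hψe hψf hS2ψ ma1 ma2 nx1 nx2
    have h_az := Zaz tor he hf hef hfe hef1 ψ hψP hψe hψf hS2ψ hS2'ψ ma1 ma2 nz1 nz2
    have h_ab := Zab tor he hf hef hfe hef1 ψ hψP hψe hψf hS2ψ hS2'ψ ma1 ma2 nb1 nb2
    have h_xa := Zxa tor he hf hef hfe hef1 ψ hψP hψe hψf hS2ψ hS2'ψ mx1 mx2 na1 na2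
    have h_xx := Zxy tor he hf hef hfe hef1 ψ hψP hψe hψf hS2ψ hS2'ψ mx1 mx2 nx1 nx2
    have h_xz := PR7 tor he hf hef hfe hef1 ψ hψP hψe hψf hψ1 hS2ψ hS2'ψ mx1 mx2 nz1 nz2
    have h_xb := PR2 tor he hf hef hfe hef1 ψ hψP hψe hψf hS2ψ mx1 mx2 nb1 nb2
    have h_za := PR3 tor he hf hef hfe hef1 ψ hψP hψe hψf hS2'ψ mz1 mz2 na1 na2
    have h_zx := der8 h2 i0 i1 hne ψ hψP hψe hψf hψ1 mz1 mz2 nx1 nx2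
    have h_zz := Zzw tor he hf hef hfe hef1 ψ hψP hψe hψf hS2ψ hS2'ψ mz1 mz2 nz1 nz2
    have h_zb := Zzb tor he hf hef hfe hef1 ψ hψP hψe hψf hS2ψ hS2'ψ mz1 mz2 nb1 nb2
    have h_ba := Zba tor he hf hef hfe hef1 ψ hψP hψe hψf hS2ψ hS2'ψ mb1 mb2 na1 na2
    have h_bx := Zbx tor he hf hef hfe hef1 ψ hψP hψe hψf hS2ψ hS2'ψ mb1 mb2 nx1 nx2
    have h_bz := PR4 tor he hf hef hfe hef1 ψ hψP hψe hψf hS2'ψ mb1 mb2 nz1 nz2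
    have h_bb := der6 h2 i0 i1 hne ψ hψP hψe hψf mb1 mb2 nb1 nb2
    conv_lhs => rw [hU, hV]
    conv_rhs => rw [hU, hV]
    simp only [mul_add, add_mul, map_add]
    rw [h_aa, h_ax, h_az, h_ab, h_xa, h_xx, h_xz, h_xb, h_za, h_zx, h_zz, h_zb,
      h_ba, h_bx, h_bz, h_bb]
    abel
  -- master identity for φ
  have master : ∀ U V : Matrix (Fin n) (Fin n) A,
      φ (U * V) = φ U * V + U * φ V - U * (φ 1 * V) := by
    intro U V
    have h0 := sub_eq_zero.mpr (hder U V)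
    simp only [hψdef] at h0
    rw [← sub_eq_zero, ← h0]
    simp only [sub_mul, mul_sub, add_mul, mul_add, mul_assoc]
    abel
  constructor
  · refine ⟨AddMonoidHom.mk' (fun U => φ U - φ 1 * U)
        (fun U V => by simp only [map_add, mul_add]; abel),
      AddMonoidHom.mk' (fun U => φ 1 * U) (fun U V => mul_add _ _ _), ?_, ?_, ?_⟩
    · intro U V
      show φ (U * V) - φ 1 * (U * V) = (φ U - φ 1 * U) * V + U * (φ V - φ 1 * V)
      rw [master U V]
      simp only [sub_mul, mul_sub, mul_assoc]
      abel
    · intro U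
      constructor
      · show φ 1 * U = (φ 1 * 1) * U
        rw [mul_one]
      · show φ 1 * U = U * (φ 1 * 1)
        rw [mul_one]
        exact hcomm U
    · intro U
      show φ U = (φ U - φ 1 * U) + φ 1 * U
      abel
  · intro h0 U V
    rw [master U V, h0, zero_mul, mul_zero, sub_zero]
end
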